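/- arXiv:1803.08466 — 10 statements merged into one kernel-verified Lean document; each statement's English description precedes it below -/
import Mathlib

section
/- Let H be a separable Hilbert space and let {f_k} (k ≥ 1) be a frame for H with a representation f_k = T^{k-1} f_1 for all k, where T : H → H is a bounded linear operator. Then for every dual frame {g_k} of {f_k}, the operator T satisfies T f = ∑_k ⟨f, g_k⟩ f_{k+1} for all f ∈ H. -/
open scoped ComplexInnerProductSpace

/-- A sequence `f` in a Hilbert space is a frame if there exist constants
`A, B > 0` with `A‖x‖² ≤ ∑ₖ |⟨x, f k⟩|² ≤ B‖x‖²` for all `x`. -/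
def IsFrame {ι H : Type*} [NormedAddCommGroup H] [InnerProductSpace ℂ H] (f : ι → H) : Prop :=
  ∃ A B : ℝ, 0 < A ∧ 0 < B ∧ ∀ x : H,
    A * ‖x‖ ^ 2 ≤ ∑' i, ‖⟪x, f i⟫‖ ^ 2 ∧ ∑' i, ‖⟪x, f i⟫‖ ^ 2 ≤ B * ‖x‖ ^ 2

theorem HasSum.smul_succ_of_apply_eq {R M : Type*} [Semiring R] [TopologicalSpace M]
    [AddCommMonoid M] [Module R M] {T : M →L[R] M} {f : ℕ → M}
    (hT : ∀ k, T (f k) = f (k + 1)) {c : ℕ → R} {x : M}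
    (h : HasSum (fun k => c k • f k) x) : HasSum (fun k => c k • f (k + 1)) (T x) := by
  simpa only [map_smul, hT] using h.mapL T

theorem stmt0_general {H : Type*} [NormedAddCommGroup H] [InnerProductSpace ℂ H]
    (f g : ℕ → H) (T : H →L[ℂ] H)
    (hrep : ∀ k, f k = (T ^ k) (f 0))
    (hdual : ∀ x : H, HasSum (fun k => ⟪x, g k⟫ • f k) x) :
    ∀ x : H, HasSum (fun k => ⟪x, g k⟫ • f (k + 1)) (T x) := by
  have hshift : ∀ k, T (f k) = f (k + 1) := fun k => by
    rw [hrep k, hrep (k + 1), pow_succ']; rfl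
  exact fun x => (hdual x).smul_succ_of_apply_eq hshift

/-- If a frame `{f_k}` has the representation `f_k = T^k f_0` with `T` bounded, then for
every dual frame `{g_k}` one has `T x = ∑ₖ ⟨x, g k⟩ f (k+1)` for all `x`. -/
theorem stmt0 {H : Type*} [NormedAddCommGroup H] [InnerProductSpace ℂ H] [CompleteSpace H]
    [TopologicalSpace.SeparableSpace H]
    (f g : ℕ → H) (T : H →L[ℂ] H)
    (hf : IsFrame f) (hrep : ∀ k, f k = (T ^ k) (f 0))
    (hg : IsFrame g) (hdual : ∀ x : H, HasSum (fun k => ⟪x, g k⟫ • f k) x) :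
    ∀ x : H, HasSum (fun k => ⟪x, g k⟫ • f (k + 1)) (T x) :=
  stmt0_general f g T hrep hdual
end

section
/- Let {f_k} (k ≥ 1) be a frame for a separable Hilbert space H such that f_k = T^{k-1} f_1 for a bounded operator T : H → H. Then the kernel of the synthesis operator U : ℓ²(ℕ) → H, U{c_k} = ∑_k c_k f_k, is invariant under the right-shift operator 𝒯{c_1, c_2, ...} = {0, c_1, c_2, ...}. -/
open scoped ComplexInnerProductSpace

theorem HasSum.smul_succ_of_map_eq {R M : Type*} [Semiring R] [AddCommMonoid M]
    [TopologicalSpace M] [Module R M] (T : M →L[R] M) {f : ℕ → M}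
    (hT : ∀ k, f (k + 1) = T (f k)) {c : ℕ → R} {s : M}
    (h : HasSum (fun k => c k • f k) s) : HasSum (fun k => c k • f (k + 1)) (T s) := by
  simpa only [hT, map_smul] using h.mapL T

theorem stmt1_general {H : Type*} [NormedAddCommGroup H] [InnerProductSpace ℂ H]
    (f : ℕ → H) (T : H →L[ℂ] H)
    (hrep : ∀ k, f k = (T ^ k) (f 0)) :
    ∀ c : ℕ → ℂ, Summable (fun k => ‖c k‖ ^ 2) →
      HasSum (fun k => c k • f k) (0 : H) → HasSum (fun k => c k • f (k + 1)) (0 : H) := by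
  intro c _ hsum
  have horbit : ∀ k, f (k + 1) = T (f k) := fun k => by
    rw [hrep, hrep k, pow_succ']; rfl
  simpa only [map_zero] using hsum.smul_succ_of_map_eq T horbit

/-- If a frame `{f_k}` is represented as `f_k = T^k f_0` for a bounded operator `T`,
then the kernel of the synthesis operator is invariant under the right shift, i.e.
whenever `{c_k} ∈ ℓ²` and `∑ c_k f_k = 0`, also `∑ c_k f_{k+1} = 0`. -/
theorem stmt1 {H : Type*} [NormedAddCommGroup H] [InnerProductSpace ℂ H] [CompleteSpace H]
    [TopologicalSpace.SeparableSpace H]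
    (f : ℕ → H) (T : H →L[ℂ] H)
    (hf : IsFrame f) (hrep : ∀ k, f k = (T ^ k) (f 0)) :
    ∀ c : ℕ → ℂ, Summable (fun k => ‖c k‖ ^ 2) →
      HasSum (fun k => c k • f k) (0 : H) → HasSum (fun k => c k • f (k + 1)) (0 : H) :=
  stmt1_general f T hrep
end

section
/- Let {f_k} (k ≥ 1) be a frame for an infinite-dimensional separable Hilbert space H and suppose the kernel of the synthesis operator U is invariant under the right-shift operator on ℓ²(ℕ). Then the sequence {f_k} is linearly independent (every finite linear combination ∑_{k=1}^N c_k f_k = 0 forces all c_k = 0). -/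
/-!
Shift invariance of the kernel turns one nontrivial finite relation `∑ g k • f k = 0` into the
whole family of relations `∑ g k • f (k + n) = 0`. If `m` is the largest index with `g m ≠ 0`,
these express each `f (m + n)` through vectors of smaller index, so every `f j` lies in the
finite-dimensional span of `f 0, …, f (m - 1)`. The lower frame bound makes the span of a frame
dense, and a dense finite-dimensional subspace is everything: `H` would be finite-dimensional.
-/

open scoped ComplexInnerProductSpace

open Finset

theorem sum_smul_succ_eq_zero_of_hasSum {E : Type*} [AddCommMonoid E] [TopologicalSpace E]
    [T2Space E] [Module ℂ E] {f : ℕ → E}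
    (hker : ∀ c : ℕ → ℂ, Summable (fun k => ‖c k‖ ^ 2) →
      HasSum (fun k => c k • f k) 0 → HasSum (fun k => c k • f (k + 1)) 0)
    (s : Finset ℕ) (g : ℕ → ℂ) (hrel : ∑ k ∈ s, g k • f k = 0) :
    ∑ k ∈ s, g k • f (k + 1) = 0 := by
  classical
  set c : ℕ → ℂ := fun k => if k ∈ s then g k else 0
  have hc : ∀ k ∉ s, c k = 0 := fun k hk => if_neg hk
  have hsum : ∀ v : ℕ → E, HasSum (fun k => c k • v k) (∑ k ∈ s, g k • v k) := fun v => by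
    rw [show ∑ k ∈ s, g k • v k = ∑ k ∈ s, c k • v k from
      sum_congr rfl fun k hk => by simp [c, hk]]
    exact hasSum_sum_of_ne_finset_zero fun k hk => by simp [hc k hk]
  have hsq : Summable (fun k => ‖c k‖ ^ 2) :=
    summable_of_ne_finset_zero (s := s) fun k hk => by simp [hc k hk]
  exact (hsum _).unique (hker c hsq (hrel ▸ hsum f))

theorem sum_smul_add_eq_zero_of_shift {R M : Type*} [Semiring R] [AddCommMonoid M] [Module R M]
    {f : ℕ → M}
    (hshift : ∀ (s : Finset ℕ) (g : ℕ → R),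
      ∑ k ∈ s, g k • f k = 0 → ∑ k ∈ s, g k • f (k + 1) = 0)
    {s : Finset ℕ} {g : ℕ → R} (hrel : ∑ k ∈ s, g k • f k = 0) (n : ℕ) :
    ∑ k ∈ s, g k • f (k + n) = 0 := by
  induction n with
  | zero => simpa using hrel
  | succ n ih =>
    -- the relation `ih`, reindexed along `k ↦ k + n`, is one with `f` itself
    have hmap := hshift (s.map (addRightEmbedding n)) (fun j => g (j - n))
      (by simpa [sum_map] using ih)
    simpa [sum_map, add_assoc] using hmap

theorem Submodule.mem_of_sum_smul_eq_zero {ι K M : Type*} [DecidableEq ι] [DivisionRing K]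
    [AddCommGroup M] [Module K M] (p : Submodule K M) {s : Finset ι} {g : ι → K} {v : ι → M}
    (hrel : ∑ k ∈ s, g k • v k = 0) {m : ι} (hm : m ∈ s) (hgm : g m ≠ 0)
    (hp : ∀ k ∈ s.erase m, g k • v k ∈ p) : v m ∈ p := by
  rw [← add_sum_erase s _ hm] at hrel
  have hsmul : g m • v m ∈ p := by
    rw [eq_neg_of_add_eq_zero_left hrel]
    exact p.neg_mem (p.sum_mem hp)
  exact (p.smul_mem_iff hgm).mp hsmul

theorem finiteDimensional_span_range_of_shifted_relation {K M : Type*} [DivisionRing K]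
    [AddCommGroup M] [Module K M] (f : ℕ → M) {s : Finset ℕ} {g : ℕ → K} {i : ℕ} (hi : i ∈ s)
    (hgi : g i ≠ 0) (hrel : ∀ n, ∑ k ∈ s, g k • f (k + n) = 0) :
    FiniteDimensional K (Submodule.span K (Set.range f)) := by
  classical
  obtain ⟨m, hm, hmax⟩ := (s.filter (g · ≠ 0)).exists_max_image id ⟨i, by simp [hi, hgi]⟩
  rw [mem_filter] at hm
  set p := Submodule.span K (f '' Set.Iio m)
  have hall : ∀ j, f j ∈ p := by
    intro j
    induction j using Nat.strong_induction_on with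
    | _ j ih =>
      rcases lt_or_ge j m with hjm | hmj
      · exact Submodule.subset_span ⟨j, hjm, rfl⟩
      obtain ⟨n, rfl⟩ := Nat.exists_eq_add_of_le hmj
      refine p.mem_of_sum_smul_eq_zero (v := fun k => f (k + n)) (hrel n) hm.1 hm.2 ?_
      intro k hk
      rcases eq_or_ne (g k) 0 with hgk | hgk
      · simp [hgk]
      have hkm : k < m := lt_of_le_of_ne (hmax k (by simp [mem_of_mem_erase hk, hgk]))
        (ne_of_mem_erase hk)
      exact p.smul_mem _ (ih _ (by omega))
  have : FiniteDimensional K p := FiniteDimensional.span_of_finite K ((Set.finite_Iio m).image f)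
  exact Submodule.finiteDimensional_of_le (Submodule.span_le.mpr (Set.range_subset_iff.mpr hall))

theorem IsFrame.orthogonal_span_range_eq_bot {ι H : Type*} [NormedAddCommGroup H]
    [InnerProductSpace ℂ H] {f : ι → H} (hf : IsFrame f) :
    (Submodule.span ℂ (Set.range f))ᗮ = ⊥ := by
  obtain ⟨A, B, hA, -, hframe⟩ := hf
  rw [Submodule.eq_bot_iff]
  intro x hx
  have hinner : ∀ i, ⟪x, f i⟫ = 0 := fun i =>
    (Submodule.mem_orthogonal' _ x).mp hx _ (Submodule.subset_span ⟨i, rfl⟩)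
  have hlower : A * ‖x‖ ^ 2 ≤ 0 := by simpa [hinner] using (hframe x).1
  have hx2 : ‖x‖ ^ 2 = 0 := le_antisymm (nonpos_of_mul_nonpos_right hlower hA) (sq_nonneg _)
  simpa using hx2

theorem IsFrame.finiteDimensional_of_finiteDimensional_span {ι H : Type*} [NormedAddCommGroup H]
    [InnerProductSpace ℂ H] {f : ι → H} (hf : IsFrame f)
    [FiniteDimensional ℂ (Submodule.span ℂ (Set.range f))] : FiniteDimensional ℂ H := by
  have htop := Submodule.orthogonal_eq_bot_iff.mp hf.orthogonal_span_range_eq_bot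
  have : FiniteDimensional ℂ (⊤ : Submodule ℂ H) := htop ▸ inferInstance
  exact Module.Finite.equiv Submodule.topEquiv

theorem stmt2_general {H : Type*} [NormedAddCommGroup H] [InnerProductSpace ℂ H]
    (hdim : ¬ FiniteDimensional ℂ H)
    (f : ℕ → H) (hf : IsFrame f)
    (hker : ∀ c : ℕ → ℂ, Summable (fun k => ‖c k‖ ^ 2) →
      HasSum (fun k => c k • f k) (0 : H) → HasSum (fun k => c k • f (k + 1)) (0 : H)) :
    LinearIndependent ℂ f := by
  rw [linearIndependent_iff']
  intro s g hrel i hi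
  by_contra hgi
  have hshifted := sum_smul_add_eq_zero_of_shift (sum_smul_succ_eq_zero_of_hasSum hker) hrel
  have := finiteDimensional_span_range_of_shifted_relation f hi hgi hshifted
  exact hdim hf.finiteDimensional_of_finiteDimensional_span

/-- If a frame `{f_k}` for an infinite-dimensional separable Hilbert space has the kernel of
its synthesis operator invariant under the right shift, then `{f_k}` is linearly
independent. -/
theorem stmt2 {H : Type*} [NormedAddCommGroup H] [InnerProductSpace ℂ H] [CompleteSpace H]
    [TopologicalSpace.SeparableSpace H] (hdim : ¬ FiniteDimensional ℂ H)
    (f : ℕ → H) (hf : IsFrame f)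
    (hker : ∀ c : ℕ → ℂ, Summable (fun k => ‖c k‖ ^ 2) →
      HasSum (fun k => c k • f k) (0 : H) → HasSum (fun k => c k • f (k + 1)) (0 : H)) :
    LinearIndependent ℂ f :=
  stmt2_general hdim f hf hker
end

section
/- Let {f_k} be a Riesz basis for a separable Hilbert space H. Then there exists a bounded operator T : H → H such that f_k = T^{k-1} f_1 for all k ≥ 1. -/
open scoped ComplexInnerProductSpace

/-- Every Riesz basis `{f_k}` for a separable Hilbert space is represented by a bounded
operator: `f_k = T^k f_0`. -/
theorem stmt5 {H : Type*} [NormedAddCommGroup H] [InnerProductSpace ℂ H] [CompleteSpace H]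
    [TopologicalSpace.SeparableSpace H]
    (f : ℕ → H)
    (hspan : (Submodule.span ℂ (Set.range f)).topologicalClosure = ⊤)
    (A B : ℝ) (hA : 0 < A) (hB : 0 < B)
    (hRiesz : ∀ c : ℕ →₀ ℂ,
      A * ∑ k ∈ c.support, ‖c k‖ ^ 2 ≤ ‖∑ k ∈ c.support, c k • f k‖ ^ 2 ∧
      ‖∑ k ∈ c.support, c k • f k‖ ^ 2 ≤ B * ∑ k ∈ c.support, ‖c k‖ ^ 2) :
    ∃ T : H →L[ℂ] H, ∀ k, f k = (T ^ k) (f 0) := by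
  classical
  set L : (ℕ →₀ ℂ) →ₗ[ℂ] H := Finsupp.linearCombination ℂ f with hL
  set L' : (ℕ →₀ ℂ) →ₗ[ℂ] H := Finsupp.linearCombination ℂ (f ∘ Nat.succ) with hL'
  have hLapp : ∀ c : ℕ →₀ ℂ, L c = ∑ k ∈ c.support, c k • f k := fun c => rfl
  -- key inequalities
  have hlow : ∀ c : ℕ →₀ ℂ, A * ∑ k ∈ c.support, ‖c k‖ ^ 2 ≤ ‖L c‖ ^ 2 := fun c => (hRiesz c).1
  have hupp' : ∀ c : ℕ →₀ ℂ, ‖L' c‖ ^ 2 ≤ B * ∑ k ∈ c.support, ‖c k‖ ^ 2 := by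
    intro c
    have h1 : L' c = L (c.mapDomain Nat.succ) := by
      rw [hL, hL', Finsupp.linearCombination_mapDomain]
    have h2 : ∑ j ∈ (c.mapDomain Nat.succ).support, ‖(c.mapDomain Nat.succ) j‖ ^ 2
        = ∑ k ∈ c.support, ‖c k‖ ^ 2 := by
      have := Finsupp.sum_mapDomain_index_inj (s := c)
        (h := fun (_ : ℕ) (v : ℂ) => ‖v‖ ^ 2) Nat.succ_injective
      simpa [Finsupp.sum] using this
    calc ‖L' c‖ ^ 2 = ‖L (c.mapDomain Nat.succ)‖ ^ 2 := by rw [h1]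
      _ ≤ B * ∑ j ∈ (c.mapDomain Nat.succ).support, ‖(c.mapDomain Nat.succ) j‖ ^ 2 :=
          (hRiesz _).2
      _ = B * ∑ k ∈ c.support, ‖c k‖ ^ 2 := by rw [h2]
  -- L is injective
  have hLinj : Function.Injective L := by
    rw [← LinearMap.ker_eq_bot, LinearMap.ker_eq_bot']
    intro c hc
    have h := hlow c
    rw [hc] at h
    simp only [norm_zero] at h
    have hsum : ∑ k ∈ c.support, ‖c k‖ ^ 2 ≤ 0 := by
      nlinarith
    have hnonneg : (0:ℝ) ≤ ∑ k ∈ c.support, ‖c k‖ ^ 2 :=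
      Finset.sum_nonneg fun k _ => by positivity
    have hz : ∑ k ∈ c.support, ‖c k‖ ^ 2 = 0 := le_antisymm hsum hnonneg
    ext k
    by_contra hk
    have hk' : k ∈ c.support := Finsupp.mem_support_iff.2 hk
    have : ‖c k‖ ^ 2 = 0 := by
      have := Finset.sum_eq_zero_iff_of_nonneg (fun i _ => by positivity) |>.1 hz k hk'
      exact this
    exact hk (by simpa using this)
  set V : Submodule ℂ H := LinearMap.range L with hV
  have hVspan : V = Submodule.span ℂ (Set.range f) := by
    rw [hV, hL]; exact Finsupp.range_linearCombination ℂ (v := f)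
  set e : (ℕ →₀ ℂ) ≃ₗ[ℂ] V := LinearEquiv.ofInjective L hLinj with he
  have hecoe : ∀ c : ℕ →₀ ℂ, ((e c : V) : H) = L c := fun c => rfl
  set T₀ : V →ₗ[ℂ] H := L' ∘ₗ (e.symm : V →ₗ[ℂ] (ℕ →₀ ℂ)) with hT₀
  set C : ℝ := Real.sqrt (B / A) with hC
  have hbound : ∀ x : V, ‖T₀ x‖ ≤ C * ‖x‖ := by
    intro x
    set c : ℕ →₀ ℂ := e.symm x with hc
    have hx : (x : H) = L c := by
      rw [hc, ← hecoe]
      simp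
    have h1 : ‖T₀ x‖ ^ 2 ≤ B * ∑ k ∈ c.support, ‖c k‖ ^ 2 := hupp' c
    have h2 : A * ∑ k ∈ c.support, ‖c k‖ ^ 2 ≤ ‖(x : H)‖ ^ 2 := by rw [hx]; exact hlow c
    have hxn : ‖x‖ = ‖(x : H)‖ := rfl
    have h3 : ‖T₀ x‖ ^ 2 ≤ (B / A) * ‖(x : H)‖ ^ 2 := by
      rw [div_mul_eq_mul_div, le_div_iff₀ hA]
      nlinarith
    have h4 : ‖T₀ x‖ ≤ Real.sqrt ((B / A) * ‖(x : H)‖ ^ 2) := by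
      rw [← Real.sqrt_sq (norm_nonneg (T₀ x))]
      exact Real.sqrt_le_sqrt h3
    rw [hxn]
    calc ‖T₀ x‖ ≤ Real.sqrt ((B / A) * ‖(x : H)‖ ^ 2) := h4
      _ = C * ‖(x : H)‖ := by
          rw [Real.sqrt_mul (by positivity), Real.sqrt_sq (norm_nonneg _), hC]
  set T' : V →L[ℂ] H := T₀.mkContinuous C hbound with hT'
  have hdense : DenseRange V.subtypeL := by
    have : Dense (V : Set H) := by
      rw [Submodule.dense_iff_topologicalClosure_eq_top, hVspan]; exact hspan
    intro x
    simpa [Set.range, Submodule.coe_subtypeL] using this x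
  have hunif : IsUniformInducing (V.subtypeL : V →L[ℂ] H) :=
    isometry_subtype_coe.isUniformInducing
  refine ⟨T'.extend V.subtypeL, ?_⟩
  have hTf : ∀ k, T'.extend V.subtypeL (f k) = f (k + 1) := by
    intro k
    have hfk : f k = L (Finsupp.single k 1) := by
      rw [hL]; simp
    have hmem : f k ∈ V := by rw [hfk]; exact ⟨_, rfl⟩
    have hx : V.subtypeL (⟨f k, hmem⟩ : V) = f k := rfl
    rw [← hx, ContinuousLinearMap.extend_eq (h_dense := hdense) (h_e := hunif)]
    have hsymm : e.symm (⟨f k, hmem⟩ : V) = Finsupp.single k 1 := by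
      rw [LinearEquiv.symm_apply_eq]
      apply Subtype.ext
      rw [hecoe, ← hfk]
    show T₀ (⟨f k, hmem⟩ : V) = f (k + 1)
    rw [hT₀]
    simp only [LinearMap.comp_apply, LinearEquiv.coe_coe, hsymm]
    rw [hL']
    simp
  intro k
  induction k with
  | zero => simp
  | succ n ih =>
    rw [pow_succ']
    simp only [ContinuousLinearMap.mul_apply]
    rw [← ih, hTf]
end

section
/- The set of bounded operators T on an infinite-dimensional separable Hilbert space H for which there exists φ ∈ H with {T^n φ} (n ≥ 0) a frame for H is not open in B(H) (with operator norm topology), provided it is nonempty and contains an operator of norm 1. -/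
open scoped ComplexInnerProductSpace

lemma no_frame_of_norm_lt_one {H : Type*} [NormedAddCommGroup H] [InnerProductSpace ℂ H]
    [CompleteSpace H] (hdim : ¬ FiniteDimensional ℂ H) (S : H →L[ℂ] H) (hS : ‖S‖ < 1)
    (φ : H) : ¬ IsFrame (fun n : ℕ => (S ^ n) φ) := by
  rintro ⟨A, B, hA, hB, hframe⟩
  set r : ℝ := ‖S‖ with hr
  have hr0 : 0 ≤ r := norm_nonneg _
  have hr2 : r ^ 2 < 1 := by nlinarith
  have hr2' : 0 ≤ r ^ 2 := sq_nonneg r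
  have h1r : 0 < 1 - r ^ 2 := by linarith
  -- choose N with small geometric tail
  have htend : Filter.Tendsto (fun N : ℕ => ‖φ‖ ^ 2 / (1 - r ^ 2) * (r ^ 2) ^ N)
      Filter.atTop (nhds 0) := by
    simpa using (tendsto_pow_atTop_nhds_zero_of_lt_one hr2' hr2).const_mul
      (‖φ‖ ^ 2 / (1 - r ^ 2))
  obtain ⟨N, hN⟩ := (htend.eventually_lt_const hA).exists
  -- an orthogonal nonzero vector
  set V : Submodule ℂ H := Submodule.span ℂ ((fun n : ℕ => (S ^ n) φ) '' (Set.Iio N)) with hV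
  have hfin : FiniteDimensional ℂ V :=
    FiniteDimensional.span_of_finite ℂ ((Set.finite_Iio N).image _)
  have hVtop : V ≠ ⊤ := by
    intro h
    exact hdim (Module.Finite.equiv (h ▸ Submodule.topEquiv))
  have hVo : Vᗮ ≠ ⊥ := by
    intro h
    exact hVtop (Submodule.orthogonal_eq_bot_iff.mp h)
  obtain ⟨x, hxV, hx0⟩ := Submodule.exists_mem_ne_zero_of_ne_bot hVo
  have hx2 : 0 < ‖x‖ ^ 2 := pow_pos (norm_pos_iff.mpr hx0) 2
  set g : ℕ → ℝ := fun n => ‖⟪x, (S ^ n) φ⟫‖ ^ 2 with hg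
  have hg0 : ∀ n < N, g n = 0 := by
    intro n hn
    have hmem : (S ^ n) φ ∈ V := Submodule.subset_span ⟨n, hn, rfl⟩
    have := Submodule.inner_right_of_mem_orthogonal hmem hxV
    have h2 : ⟪x, (S ^ n) φ⟫ = 0 := by
      rw [← inner_conj_symm, this, map_zero]
    simp only [hg, h2, norm_zero]
    norm_num
  have hgle : ∀ n, g n ≤ (‖x‖ * ‖φ‖) ^ 2 * (r ^ 2) ^ n := by
    intro n
    have h1 : ‖(S ^ n) φ‖ ≤ r ^ n * ‖φ‖ := by
      induction n with
      | zero => simp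
      | succ k ih =>
          have : (S ^ (k + 1)) φ = S ((S ^ k) φ) := by
            rw [pow_succ']; rfl
          rw [this, pow_succ]
          calc ‖S ((S ^ k) φ)‖ ≤ ‖S‖ * ‖(S ^ k) φ‖ := S.le_opNorm _
            _ ≤ r * (r ^ k * ‖φ‖) := by gcongr
            _ = r ^ k * r * ‖φ‖ := by ring
    have h2 : ‖⟪x, (S ^ n) φ⟫‖ ≤ ‖x‖ * (r ^ n * ‖φ‖) :=
      (norm_inner_le_norm x _).trans (mul_le_mul_of_nonneg_left h1 (norm_nonneg x))
    have h3 : (0:ℝ) ≤ ‖⟪x, (S ^ n) φ⟫‖ := norm_nonneg _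
    calc g n ≤ (‖x‖ * (r ^ n * ‖φ‖)) ^ 2 := by
          exact pow_le_pow_left₀ h3 h2 2
      _ = (‖x‖ * ‖φ‖) ^ 2 * (r ^ 2) ^ n := by ring
  by_cases hsumg : Summable g
  · have key := (hframe x).1
    have hsplit := hsumg.sum_add_tsum_nat_add N
    have hzero : ∑ i ∈ Finset.range N, g i = 0 :=
      Finset.sum_eq_zero fun i hi => hg0 i (Finset.mem_range.mp hi)
    have hmaj : Summable (fun n : ℕ => (‖x‖ * ‖φ‖) ^ 2 * (r ^ 2) ^ N * (r ^ 2) ^ n) :=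
      (summable_geometric_of_lt_one hr2' hr2).mul_left _
    have htail : ∑' n : ℕ, g (n + N) ≤
        (‖x‖ * ‖φ‖) ^ 2 * (r ^ 2) ^ N * (1 - r ^ 2)⁻¹ := by
      have hle : ∀ n : ℕ, g (n + N) ≤ (‖x‖ * ‖φ‖) ^ 2 * (r ^ 2) ^ N * (r ^ 2) ^ n := by
        intro n
        calc g (n + N) ≤ (‖x‖ * ‖φ‖) ^ 2 * (r ^ 2) ^ (n + N) := hgle (n + N)
          _ = (‖x‖ * ‖φ‖) ^ 2 * (r ^ 2) ^ N * (r ^ 2) ^ n := by rw [pow_add]; ring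
      calc ∑' n : ℕ, g (n + N) ≤ ∑' n : ℕ, (‖x‖ * ‖φ‖) ^ 2 * (r ^ 2) ^ N * (r ^ 2) ^ n :=
            Summable.tsum_le_tsum hle ((summable_nat_add_iff N).mpr hsumg) hmaj
        _ = (‖x‖ * ‖φ‖) ^ 2 * (r ^ 2) ^ N * (1 - r ^ 2)⁻¹ := by
            rw [tsum_mul_left, tsum_geometric_of_lt_one hr2' hr2]
    have hfinal : A * ‖x‖ ^ 2 ≤ (‖x‖ * ‖φ‖) ^ 2 * (r ^ 2) ^ N * (1 - r ^ 2)⁻¹ := by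
      calc A * ‖x‖ ^ 2 ≤ ∑' n, g n := key
        _ = ∑' n : ℕ, g (n + N) := by rw [← hsplit, hzero, zero_add]
        _ ≤ _ := htail
    have heq : (‖x‖ * ‖φ‖) ^ 2 * (r ^ 2) ^ N * (1 - r ^ 2)⁻¹ =
        ‖x‖ ^ 2 * (‖φ‖ ^ 2 / (1 - r ^ 2) * (r ^ 2) ^ N) := by
      field_simp
    rw [heq] at hfinal
    nlinarith [hN, hx2]
  · have := tsum_eq_zero_of_not_summable hsumg
    have key := (hframe x).1
    rw [hg] at this
    rw [this] at key
    nlinarith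
/-- The set of bounded operators `T` on an infinite-dimensional separable Hilbert space for
which some `φ` makes `{T^n φ}` a frame is not open in `B(H)`, provided it contains an
operator of norm `1`. -/
theorem stmt7 {H : Type*} [NormedAddCommGroup H] [InnerProductSpace ℂ H] [CompleteSpace H]
    [TopologicalSpace.SeparableSpace H] (hdim : ¬ FiniteDimensional ℂ H)
    (hne : ∃ T : H →L[ℂ] H, ‖T‖ = 1 ∧ ∃ φ : H, IsFrame (fun n : ℕ => (T ^ n) φ)) :
    ¬ IsOpen {T : H →L[ℂ] H | ∃ φ : H, IsFrame (fun n : ℕ => (T ^ n) φ)} := by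
  intro hopen
  obtain ⟨T, hT1, hTf⟩ := hne
  have hTmem : T ∈ {T : H →L[ℂ] H | ∃ φ : H, IsFrame (fun n : ℕ => (T ^ n) φ)} := hTf
  obtain ⟨ε, hε, hball⟩ := Metric.isOpen_iff.mp hopen T hTmem
  set δ : ℝ := min (ε / 2) (1 / 2) with hδ
  have hδ0 : 0 < δ := lt_min (by linarith) (by norm_num)
  have hδ1 : δ < 1 := lt_of_le_of_lt (min_le_right _ _) (by norm_num)
  have hδε : δ < ε := lt_of_le_of_lt (min_le_left _ _) (by linarith)
  set S : H →L[ℂ] H := ((1 - δ : ℝ) : ℂ) • T with hSdef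
  have hSnorm : ‖S‖ = 1 - δ := by
    rw [hSdef, norm_smul, hT1, mul_one, Complex.norm_real, Real.norm_eq_abs,
      abs_of_pos (by linarith : (0:ℝ) < 1 - δ)]
  have hSball : S ∈ Metric.ball T ε := by
    rw [Metric.mem_ball, dist_eq_norm]
    have : S - T = ((-δ : ℝ) : ℂ) • T := by
      rw [hSdef]
      push_cast
      module
    rw [this, norm_smul, hT1, mul_one, Complex.norm_real, Real.norm_eq_abs, abs_neg,
      abs_of_pos hδ0]
    exact hδε
  obtain ⟨φ, hφ⟩ := hball hSball
  exact no_frame_of_norm_lt_one hdim S (by rw [hSnorm]; linarith) φ hφ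
end

section
/- Let {f_k} (k ≥ 1) be an overcomplete frame for a Hilbert space H such that f_k = T^{k-1} f_1 for a bounded operator T : H → H. Then there exists N ∈ ℕ such that for all ℓ ≥ 0, the family {f_k : 1 ≤ k ≤ N} ∪ {f_k : k ≥ N + ℓ + 1} is a frame for H. -/
open scoped ComplexInnerProductSpace

/-!
Let `p` be the first index with `c p ≠ 0`. Solving `∑ c k • f k = 0` for `f p` writes `f p` as an
`ℓ²`-combination `∑ d k • f (k + (p + 1))` of later frame vectors, and applying `T ^ m` shows that
every `f n` with `p ≤ n` is the same combination of its successors. By Cauchy–Schwarz,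
`‖⟪x, f n⟫‖² ≤ K * S (n + 1)` with `K = ∑ ‖d k‖²` and `S n = ∑_{k ≥ n} ‖⟪x, f k⟫‖²`, so
`S n ≤ (1 + K) * S (n + 1)` for `p ≤ n`. Hence removing `f p, …, f (p + ℓ - 1)` costs at most a
factor `(1 + K) ^ ℓ` in the lower frame bound, and `N = p` works.
-/

open Finset

theorem norm_sq_le_tsum_mul_tsum_of_hasSum {ι R : Type*} [NonUnitalSeminormedRing R]
    {u v : ι → R} {t : R} (hu : Summable fun i => ‖u i‖ ^ 2) (hv : Summable fun i => ‖v i‖ ^ 2)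
    (ht : HasSum (fun i => u i * v i) t) :
    ‖t‖ ^ 2 ≤ (∑' i, ‖u i‖ ^ 2) * ∑' i, ‖v i‖ ^ 2 := by
  simp only [← Real.rpow_two] at hu hv ⊢
  obtain ⟨hsum, hle⟩ := Real.summable_and_inner_le_Lp_mul_Lq_tsum_of_nonneg .two_two
    (fun i => norm_nonneg (u i)) (fun i => norm_nonneg (v i)) hu hv
  have hnorm : ‖t‖ ≤ ∑' i, ‖u i‖ * ‖v i‖ :=
    ht.norm_le_of_bounded hsum.hasSum fun i => norm_mul_le _ _
  rw [← Real.sqrt_le_sqrt_iff (by positivity), Real.sqrt_mul (by positivity), Real.rpow_two,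
    Real.sqrt_sq (norm_nonneg _), Real.sqrt_eq_rpow, Real.sqrt_eq_rpow]
  exact hnorm.trans hle

theorem norm_inner_sq_le_tsum_mul_tsum_of_hasSum {ι 𝕜 E : Type*} [RCLike 𝕜]
    [NormedAddCommGroup E] [InnerProductSpace 𝕜 E] {d : ι → 𝕜} {v : ι → E} {y : E} (x : E)
    (hd : Summable fun i => ‖d i‖ ^ 2) (hv : Summable fun i => ‖inner 𝕜 x (v i)‖ ^ 2)
    (hy : HasSum (fun i => d i • v i) y) :
    ‖inner 𝕜 x y‖ ^ 2 ≤ (∑' i, ‖d i‖ ^ 2) * ∑' i, ‖inner 𝕜 x (v i)‖ ^ 2 :=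
  norm_sq_le_tsum_mul_tsum_of_hasSum hd hv <| by
    simpa only [innerSL_apply_apply, inner_smul_right] using (innerSL 𝕜 x).hasSum hy

theorem tsum_nat_add_le_pow_mul_tsum_nat_add {g : ℕ → ℝ} (hg : Summable g) {p : ℕ} {K : ℝ}
    (hK : 0 ≤ K) (hgK : ∀ n, p ≤ n → g n ≤ K * ∑' i, g (i + (n + 1))) (ℓ : ℕ) :
    ∑' i, g (i + p) ≤ (1 + K) ^ ℓ * ∑' i, g (i + (p + ℓ)) := by
  have tail_eq (n : ℕ) : ∑' i, g (i + n) = g n + ∑' i, g (i + (n + 1)) := by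
    rw [((summable_nat_add_iff n).mpr hg).tsum_eq_zero_add]
    simp only [zero_add, add_right_comm _ 1, add_assoc]
  have tail_step (n : ℕ) (hn : p ≤ n) :
      ∑' i, g (i + n) ≤ (1 + K) * ∑' i, g (i + (n + 1)) := by
    rw [tail_eq n]; linarith [hgK n hn]
  induction ℓ with
  | zero => simp
  | succ m ih =>
    calc ∑' i, g (i + p) ≤ (1 + K) ^ m * ∑' i, g (i + (p + m)) := ih
      _ ≤ (1 + K) ^ m * ((1 + K) * ∑' i, g (i + (p + m + 1))) := by
        gcongr; exact tail_step _ (Nat.le_add_right p m)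
      _ = (1 + K) ^ (m + 1) * ∑' i, g (i + (p + (m + 1))) := by
        rw [← add_assoc, pow_succ, mul_assoc]

theorem tsum_subtype_lt_or_add_le {α : Type*} [AddCommGroup α] [UniformSpace α]
    [IsUniformAddGroup α] [CompleteSpace α] [T2Space α] {g : ℕ → α} (hg : Summable g) (N ℓ : ℕ) :
    ∑' k : {k // k < N ∨ N + ℓ ≤ k}, g k = ∑ k ∈ range N, g k + ∑' i, g (i + (N + ℓ)) := by
  let s : Set ℕ := {k | k < N ∨ N + ℓ ≤ k}
  have hcompl : sᶜ = ↑(Ico N (N + ℓ)) := by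
    ext k; simp only [s, Set.mem_compl_iff, Set.mem_ofPred_eq, coe_Ico, Set.mem_Ico]; omega
  have h : ∑' k : s, g k + ∑' k : ↑sᶜ, g k = ∑' k, g k :=
    (hg.subtype s).tsum_add_tsum_compl (hg.subtype sᶜ)
  rw [hcompl, Finset.tsum_subtype', ← hg.sum_add_tsum_nat_add (N + ℓ),
    ← sum_range_add_sum_Ico _ (Nat.le_add_right N ℓ)] at h
  rw [← add_right_cancel_iff (a := ∑ k ∈ Ico N (N + ℓ), g k)]
  exact h.trans (add_right_comm _ _ _)

theorem exists_hasSum_tail_of_hasSum_zero {𝕜 E : Type*} [NormedField 𝕜]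
    [AddCommGroup E] [TopologicalSpace E] [Module 𝕜 E] [ContinuousConstSMul 𝕜 E]
    [IsTopologicalAddGroup E] {f : ℕ → E} {c : ℕ → 𝕜} (hc : c ≠ 0)
    (hc2 : Summable fun k => ‖c k‖ ^ 2) (hsum : HasSum (fun k => c k • f k) 0) :
    ∃ p, ∃ d : ℕ → 𝕜, Summable (fun k => ‖d k‖ ^ 2) ∧
      HasSum (fun k => d k • f (k + (p + 1))) (f p) := by
  classical
  have hex : ∃ q, c q ≠ 0 := Function.ne_iff.mp hc
  set p := Nat.find hex
  have hcp : c p ≠ 0 := Nat.find_spec hex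
  have hhead : ∑ k ∈ range (p + 1), c k • f k = c p • f p := by
    rw [sum_range_succ, sum_eq_zero fun k hk => ?_, zero_add]
    rw [of_not_not (Nat.find_min hex (mem_range.mp hk)), zero_smul]
  have htail := (hasSum_nat_add_iff' (p + 1)).mpr hsum
  rw [hhead, zero_sub] at htail
  refine ⟨p, fun k => -(c p)⁻¹ * c (k + (p + 1)), ?_, ?_⟩
  · refine (((summable_nat_add_iff (p + 1)).mpr hc2).mul_left (‖(c p)⁻¹‖ ^ 2)).congr fun k => ?_
    rw [norm_mul, norm_neg, mul_pow]
  · simpa [mul_smul, smul_neg, inv_smul_smul₀ hcp] using htail.const_smul (-(c p)⁻¹)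

theorem hasSum_nat_add_of_orbit {R M : Type*} [Semiring R] [AddCommMonoid M]
    [TopologicalSpace M] [Module R M] {T : M →L[R] M} {f : ℕ → M}
    (hrep : ∀ k, f k = (T ^ k) (f 0)) {d : ℕ → R} {p : ℕ}
    (hp : HasSum (fun k => d k • f (k + (p + 1))) (f p)) {n : ℕ} (hn : p ≤ n) :
    HasSum (fun k => d k • f (k + (n + 1))) (f n) := by
  have hT (m j : ℕ) : (T ^ m) (f j) = f (j + m) := by
    rw [hrep j, ← mul_apply_eq_comp, ← pow_add, add_comm, ← hrep]
  obtain ⟨m, rfl⟩ := Nat.exists_eq_add_of_le hn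
  have := (T ^ m).hasSum hp
  simp only [map_smul, hT] at this
  convert this using 4 with k
  omega

theorem IsFrame.summable_norm_inner_sq {ι H : Type*} [NormedAddCommGroup H]
    [InnerProductSpace ℂ H] {f : ι → H} (hf : IsFrame f) (x : H) :
    Summable fun i => ‖⟪x, f i⟫‖ ^ 2 := by
  by_contra h
  obtain ⟨A, _, hA, _, hAB⟩ := hf
  have hAx : A * ‖x‖ ^ 2 ≤ 0 := tsum_eq_zero_of_not_summable h ▸ (hAB x).1
  have hx : x = 0 := by simpa using nonpos_of_mul_nonpos_right hAx hA
  simp [hx] at h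

theorem stmt8_general {H : Type*} [NormedAddCommGroup H] [InnerProductSpace ℂ H]
    (f : ℕ → H) (T : H →L[ℂ] H) (hf : IsFrame f) (hrep : ∀ k, f k = (T ^ k) (f 0))
    (hover : ∃ c : ℕ → ℂ, c ≠ 0 ∧ Summable (fun k => ‖c k‖ ^ 2) ∧
      HasSum (fun k => c k • f k) (0 : H)) :
    ∃ N : ℕ, ∀ ℓ : ℕ, IsFrame (fun k : {k : ℕ // k < N ∨ N + ℓ ≤ k} => f k) := by
  obtain ⟨c, hc, hc2, hsum⟩ := hover
  obtain ⟨p, d, hd, hfp⟩ := exists_hasSum_tail_of_hasSum_zero hc hc2 hsum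
  set K := ∑' k, ‖d k‖ ^ 2
  have hK : 0 ≤ K := tsum_nonneg fun k => by positivity
  have hg := hf.summable_norm_inner_sq
  obtain ⟨A, B, hA, hB, hAB⟩ := hf
  refine ⟨p, fun ℓ => ⟨A / (1 + K) ^ ℓ, B, by positivity, hB, fun x => ⟨?_, ?_⟩⟩⟩
  · have htail := tsum_nat_add_le_pow_mul_tsum_nat_add (hg x) hK (fun n hn =>
      norm_inner_sq_le_tsum_mul_tsum_of_hasSum x hd ((summable_nat_add_iff (n + 1)).mpr (hg x))
        (hasSum_nat_add_of_orbit hrep hfp hn)) ℓ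
    have hhead : 0 ≤ ∑ k ∈ range p, ‖⟪x, f k⟫‖ ^ 2 := sum_nonneg fun k _ => by positivity
    have hpow : 1 ≤ (1 + K) ^ ℓ := one_le_pow₀ (by linarith)
    rw [tsum_subtype_lt_or_add_le (hg x), div_mul_eq_mul_div, div_le_iff₀ (by positivity)]
    calc A * ‖x‖ ^ 2 ≤ ∑' k, ‖⟪x, f k⟫‖ ^ 2 := (hAB x).1
      _ = ∑ k ∈ range p, ‖⟪x, f k⟫‖ ^ 2 + ∑' i, ‖⟪x, f (i + p)⟫‖ ^ 2 :=
        ((hg x).sum_add_tsum_nat_add p).symm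
      _ ≤ _ := by nlinarith
  · exact ((hg x).tsum_subtype_le _ _ fun k => by positivity).trans (hAB x).2

/-- If `{f_k}` is an overcomplete frame represented as `f_k = T^k f_0` for a bounded `T`,
then there exists `N` such that for every `ℓ`, the subfamily with indices
`k < N` or `k ≥ N + ℓ` is still a frame for `H`. -/
theorem stmt8 {H : Type*} [NormedAddCommGroup H] [InnerProductSpace ℂ H] [CompleteSpace H]
    (f : ℕ → H) (T : H →L[ℂ] H) (hf : IsFrame f) (hrep : ∀ k, f k = (T ^ k) (f 0))
    (hover : ∃ c : ℕ → ℂ, c ≠ 0 ∧ Summable (fun k => ‖c k‖ ^ 2) ∧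
      HasSum (fun k => c k • f k) (0 : H)) :
    ∃ N : ℕ, ∀ ℓ : ℕ, IsFrame (fun k : {k : ℕ // k < N ∨ N + ℓ ≤ k} => f k) :=
  stmt8_general f T hf hrep hover
end

section
/- Let {T^n φ} (n ≥ 0) be an overcomplete frame for a Hilbert space H, where T : H → H is bounded. Then the image chain of T is finite: there exists N ≥ 0 such that ran(T^N) = ran(T^{N+1}). -/
open scoped ComplexInnerProductSpace NNReal

section Aux

variable {H : Type*} [NormedAddCommGroup H] [InnerProductSpace ℂ H] [CompleteSpace H]

/-- products of ℓ² sequences are summable -/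
lemma summable_mul_of_sq {u v : ℕ → ℝ} (hu0 : ∀ n, 0 ≤ u n) (hv0 : ∀ n, 0 ≤ v n)
    (hu : Summable (fun n => u n ^ 2)) (hv : Summable (fun n => v n ^ 2)) :
    Summable (fun n => u n * v n) := by
  refine Summable.of_nonneg_of_le (fun n => mul_nonneg (hu0 n) (hv0 n)) (fun n => ?_) (hu.add hv)
  nlinarith [sq_nonneg (u n - v n), mul_nonneg (hu0 n) (hv0 n)]

/-- Cauchy–Schwarz for tsums of nonnegative sequences. -/
lemma tsum_mul_le_sqrt {u v : ℕ → ℝ} (hu0 : ∀ n, 0 ≤ u n) (hv0 : ∀ n, 0 ≤ v n)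
    (hu : Summable (fun n => u n ^ 2)) (hv : Summable (fun n => v n ^ 2)) :
    ∑' n, u n * v n ≤ Real.sqrt (∑' n, u n ^ 2) * Real.sqrt (∑' n, v n ^ 2) := by
  refine Summable.tsum_le_of_sum_le (summable_mul_of_sq hu0 hv0 hu hv) (fun s => ?_)
  refine (Real.sum_mul_le_sqrt_mul_sqrt s u v).trans ?_
  gcongr <;>
    exact Summable.sum_le_tsum s (fun i _ => sq_nonneg _) (by assumption)

lemma frame_summable_coeff {f : ℕ → H} (hf : IsFrame f) (x : H) :
    Summable (fun n => ‖⟪x, f n⟫‖ ^ 2) := by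
  by_contra h
  obtain ⟨A, B, hA, hB, hfr⟩ := hf
  have h0 : ∑' n, ‖⟪x, f n⟫‖ ^ 2 = 0 := tsum_eq_zero_of_not_summable h
  have h1 := (hfr x).1
  rw [h0] at h1
  have hx : x = 0 := by
    have : ‖x‖ ^ 2 ≤ 0 := nonpos_of_mul_nonpos_right (by linarith [mul_nonneg hA.le (sq_nonneg ‖x‖)]) hA |>.trans_eq rfl
    have : ‖x‖ = 0 := by nlinarith [norm_nonneg x]
    exact norm_eq_zero.mp this
  subst hx
  exact h (by simpa using summable_zero)

/-- The synthesis operator converges on ℓ² sequences. -/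
lemma frame_synthesis {f : ℕ → H} (hf : IsFrame f) {a : ℕ → ℂ}
    (ha : Summable (fun n => ‖a n‖ ^ 2)) : Summable (fun n => a n • f n) := by
  obtain ⟨A, B, hA, hB, hfr⟩ := hf
  rw [summable_iff_vanishing]
  intro e he
  obtain ⟨ε, hε, hball⟩ := Metric.mem_nhds_iff.1 he
  have hv := (summable_iff_vanishing.1 ha) (Metric.ball 0 (ε ^ 2 / B))
    (Metric.ball_mem_nhds 0 (by positivity))
  obtain ⟨s, hs⟩ := hv
  refine ⟨s, fun t ht => ?_⟩
  apply hball
  rw [Metric.mem_ball, dist_zero_right]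
  set v := ∑ n ∈ t, a n • f n with hv
  have hsmall : ∑ n ∈ t, ‖a n‖ ^ 2 < ε ^ 2 / B := by
    have := hs t ht
    rw [Metric.mem_ball, dist_zero_right] at this
    calc ∑ n ∈ t, ‖a n‖ ^ 2 ≤ ‖∑ n ∈ t, ‖a n‖ ^ 2‖ := le_abs_self _
      _ < _ := this
  -- key estimate : ‖v‖^2 ≤ sqrt(∑_t ‖a‖²) * sqrt(B) * ‖v‖
  have hkey : ‖v‖ ^ 2 ≤ Real.sqrt (∑ n ∈ t, ‖a n‖ ^ 2) * (Real.sqrt B * ‖v‖) := by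
    have e1 : (‖v‖ ^ 2 : ℝ) = Complex.re ⟪v, v⟫ := (inner_self_eq_norm_sq (𝕜 := ℂ) v).symm
    have e2 : ⟪v, v⟫ = ∑ n ∈ t, a n * ⟪v, f n⟫ := by
      rw [hv, inner_sum]
      exact Finset.sum_congr rfl fun n _ => inner_smul_right _ _ _
    have e3 : ‖v‖ ^ 2 ≤ ∑ n ∈ t, ‖a n‖ * ‖⟪v, f n⟫‖ := by
      rw [e1, e2]
      calc Complex.re (∑ n ∈ t, a n * ⟪v, f n⟫) ≤ ‖∑ n ∈ t, a n * ⟪v, f n⟫‖ := by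
            exact Complex.re_le_norm _
        _ ≤ ∑ n ∈ t, ‖a n * ⟪v, f n⟫‖ := norm_sum_le _ _
        _ = ∑ n ∈ t, ‖a n‖ * ‖⟪v, f n⟫‖ := by simp [norm_mul]
    have e4 : ∑ n ∈ t, ‖a n‖ * ‖⟪v, f n⟫‖ ≤
        Real.sqrt (∑ n ∈ t, ‖a n‖ ^ 2) * Real.sqrt (∑ n ∈ t, ‖⟪v, f n⟫‖ ^ 2) :=
      Real.sum_mul_le_sqrt_mul_sqrt _ _ _
    have e5 : ∑ n ∈ t, ‖⟪v, f n⟫‖ ^ 2 ≤ B * ‖v‖ ^ 2 := by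
      calc ∑ n ∈ t, ‖⟪v, f n⟫‖ ^ 2 ≤ ∑' n, ‖⟪v, f n⟫‖ ^ 2 :=
            Summable.sum_le_tsum t (fun i _ => sq_nonneg _)
              (frame_summable_coeff ⟨A, B, hA, hB, hfr⟩ v)
        _ ≤ B * ‖v‖ ^ 2 := (hfr v).2
    have e6 : Real.sqrt (∑ n ∈ t, ‖⟪v, f n⟫‖ ^ 2) ≤ Real.sqrt B * ‖v‖ := by
      rw [← Real.sqrt_sq (norm_nonneg v), ← Real.sqrt_mul hB.le]
      exact Real.sqrt_le_sqrt (by simpa using e5)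
    calc ‖v‖ ^ 2 ≤ ∑ n ∈ t, ‖a n‖ * ‖⟪v, f n⟫‖ := e3
      _ ≤ _ := e4.trans (mul_le_mul_of_nonneg_left e6 (Real.sqrt_nonneg _))
  rcases eq_or_lt_of_le (norm_nonneg v) with h0 | h0
  · rw [← h0]; exact hε
  · have hns : ‖v‖ ≤ Real.sqrt (∑ n ∈ t, ‖a n‖ ^ 2) * Real.sqrt B := by
      have := hkey
      nlinarith [Real.sqrt_nonneg (∑ n ∈ t, ‖a n‖ ^ 2), Real.sqrt_nonneg B]
    have hlt : Real.sqrt (∑ n ∈ t, ‖a n‖ ^ 2) * Real.sqrt B < ε := by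
      have h1 : Real.sqrt (∑ n ∈ t, ‖a n‖ ^ 2) < Real.sqrt (ε ^ 2 / B) :=
        Real.sqrt_lt_sqrt (Finset.sum_nonneg fun i _ => sq_nonneg _) hsmall
      have h2 : Real.sqrt (ε ^ 2 / B) * Real.sqrt B = ε := by
        rw [← Real.sqrt_mul (by positivity), div_mul_cancel₀ _ hB.ne', Real.sqrt_sq hε.le]
      calc Real.sqrt (∑ n ∈ t, ‖a n‖ ^ 2) * Real.sqrt B
          < Real.sqrt (ε ^ 2 / B) * Real.sqrt B :=
            mul_lt_mul_of_pos_right h1 (Real.sqrt_pos.2 hB)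
        _ = ε := h2
    exact lt_of_le_of_lt hns hlt


/-- Every vector has an ℓ² expansion in the frame. -/
lemma frame_expansion {f : ℕ → H} (hf : IsFrame f) (y : H) :
    ∃ a : ℕ → ℂ, Summable (fun n => ‖a n‖ ^ 2) ∧ HasSum (fun n => a n • f n) y := by
  obtain ⟨A, B, hA, hB, hfr⟩ := hf
  have hfr' : IsFrame f := ⟨A, B, hA, hB, hfr⟩
  -- coefficients are ℓ²
  have hcoef : ∀ x : H, Summable (fun n => ‖⟪f n, x⟫‖ ^ 2) := fun x => by
    simpa [norm_inner_symm] using frame_summable_coeff hfr' x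
  have hsumS : ∀ x : H, Summable (fun n => ⟪f n, x⟫ • f n) := fun x =>
    frame_synthesis hfr' (hcoef x)
  -- the frame operator as a linear map
  set Slin : H →ₗ[ℂ] H :=
    { toFun := fun x => ∑' n, ⟪f n, x⟫ • f n
      map_add' := fun x y => by
        rw [← Summable.tsum_add (hsumS x) (hsumS y)]
        exact tsum_congr fun n => by rw [inner_add_right, add_smul]
      map_smul' := fun c x => by
        simp only [RingHom.id_apply]
        rw [← ((hsumS x).hasSum.const_smul c).tsum_eq]
        exact tsum_congr fun n => by rw [inner_smul_right, smul_smul] } with hSlin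
  have hSapp : ∀ x : H, Slin x = ∑' n, ⟪f n, x⟫ • f n := fun x => rfl
  -- inner products against S x
  have hinner : ∀ x z : H, ⟪z, Slin x⟫ = ∑' n, ⟪f n, x⟫ * ⟪z, f n⟫ := by
    intro x z
    calc ⟪z, Slin x⟫ = innerSL ℂ z (∑' n, ⟪f n, x⟫ • f n) := by rw [hSapp]; rfl
      _ = ∑' n, innerSL ℂ z (⟪f n, x⟫ • f n) :=
          ContinuousLinearMap.map_tsum (innerSL ℂ z) (hsumS x)
      _ = ∑' n, ⟪f n, x⟫ * ⟪z, f n⟫ := tsum_congr fun n => by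
          simp [inner_smul_right]
  -- upper bound : ‖S x‖ ≤ B ‖x‖
  have hub : ∀ x : H, ‖Slin x‖ ≤ B * ‖x‖ := by
    intro x
    have key : ‖Slin x‖ ^ 2 ≤ B * ‖x‖ * ‖Slin x‖ := by
      have e1 : (‖Slin x‖ ^ 2 : ℝ) = Complex.re ⟪Slin x, Slin x⟫ :=
        (inner_self_eq_norm_sq (𝕜 := ℂ) _).symm
      have e2 : ‖⟪Slin x, Slin x⟫‖ ≤ ∑' n, ‖⟪f n, x⟫‖ * ‖⟪Slin x, f n⟫‖ := by
        rw [hinner]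
        refine (norm_tsum_le_tsum_norm ?_).trans_eq (tsum_congr fun n => norm_mul _ _)
        have : Summable (fun n => ‖⟪f n, x⟫‖ * ‖⟪Slin x, f n⟫‖) :=
          summable_mul_of_sq (fun n => norm_nonneg _) (fun n => norm_nonneg _)
            (hcoef x) (frame_summable_coeff hfr' (Slin x))
        exact this.congr fun n => (norm_mul _ _).symm
      have e3 : ∑' n, ‖⟪f n, x⟫‖ * ‖⟪Slin x, f n⟫‖ ≤
          Real.sqrt (∑' n, ‖⟪f n, x⟫‖ ^ 2) * Real.sqrt (∑' n, ‖⟪Slin x, f n⟫‖ ^ 2) :=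
        tsum_mul_le_sqrt (fun n => norm_nonneg _) (fun n => norm_nonneg _)
          (hcoef x) (frame_summable_coeff hfr' (Slin x))
      have e4 : Real.sqrt (∑' n, ‖⟪f n, x⟫‖ ^ 2) ≤ Real.sqrt B * ‖x‖ := by
        rw [← Real.sqrt_sq (norm_nonneg x), ← Real.sqrt_mul hB.le]
        refine Real.sqrt_le_sqrt ?_
        calc ∑' n, ‖⟪f n, x⟫‖ ^ 2 = ∑' n, ‖⟪x, f n⟫‖ ^ 2 :=
              tsum_congr fun n => by rw [norm_inner_symm]
          _ ≤ B * ‖x‖ ^ 2 := (hfr x).2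
      have e5 : Real.sqrt (∑' n, ‖⟪Slin x, f n⟫‖ ^ 2) ≤ Real.sqrt B * ‖Slin x‖ := by
        rw [← Real.sqrt_sq (norm_nonneg _), ← Real.sqrt_mul hB.le]
        exact Real.sqrt_le_sqrt (by simpa using (hfr (Slin x)).2)
      have e6 : Complex.re ⟪Slin x, Slin x⟫ ≤ ‖⟪Slin x, Slin x⟫‖ := by
        exact Complex.re_le_norm _
      have hBx : Real.sqrt B * ‖x‖ * (Real.sqrt B * ‖Slin x‖) = B * ‖x‖ * ‖Slin x‖ := by
        have hss : Real.sqrt B * Real.sqrt B = B := Real.mul_self_sqrt hB.le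
        linear_combination (‖x‖ * ‖Slin x‖) * hss
      calc ‖Slin x‖ ^ 2 = Complex.re ⟪Slin x, Slin x⟫ := e1
        _ ≤ ‖⟪Slin x, Slin x⟫‖ := e6
        _ ≤ ∑' n, ‖⟪f n, x⟫‖ * ‖⟪Slin x, f n⟫‖ := e2
        _ ≤ Real.sqrt (∑' n, ‖⟪f n, x⟫‖ ^ 2) * Real.sqrt (∑' n, ‖⟪Slin x, f n⟫‖ ^ 2) := e3
        _ ≤ Real.sqrt B * ‖x‖ * (Real.sqrt B * ‖Slin x‖) :=
            mul_le_mul e4 e5 (Real.sqrt_nonneg _) (by positivity)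
        _ = B * ‖x‖ * ‖Slin x‖ := hBx
    rcases eq_or_lt_of_le (norm_nonneg (Slin x)) with h0 | h0
    · rw [← h0]; positivity
    · nlinarith
  set S : H →L[ℂ] H := Slin.mkContinuous B hub with hS
  have hSx : ∀ x : H, S x = Slin x := fun x => rfl
  -- lower bound : A ‖x‖² ≤ re ⟪x, S x⟫
  have hdiag : ∀ x : H, Complex.re ⟪x, S x⟫ = ∑' n, ‖⟪x, f n⟫‖ ^ 2 := by
    intro x
    have : ⟪x, S x⟫ = ((∑' n, ‖⟪x, f n⟫‖ ^ 2 : ℝ) : ℂ) := by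
      rw [hSx, hinner, Complex.ofReal_tsum]
      refine tsum_congr fun n => ?_
      have : ⟪f n, x⟫ = (starRingEnd ℂ) ⟪x, f n⟫ := (inner_conj_symm _ _).symm
      rw [this, mul_comm, Complex.mul_conj']
      norm_cast
    rw [this, Complex.ofReal_re]
  have hlb : ∀ x : H, A * ‖x‖ ^ 2 ≤ Complex.re ⟪x, S x⟫ := fun x => by
    rw [hdiag]; exact (hfr x).1
  -- antilipschitz bound
  have hal : ∀ x : H, ‖x‖ ≤ (A.toNNReal⁻¹ : ℝ≥0) * ‖S x‖ := by
    intro x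
    have h1 : A * ‖x‖ ^ 2 ≤ ‖x‖ * ‖S x‖ := by
      refine (hlb x).trans ?_
      calc Complex.re ⟪x, S x⟫ ≤ ‖⟪x, S x⟫‖ := by
            exact Complex.re_le_norm _
        _ ≤ ‖x‖ * ‖S x‖ := norm_inner_le_norm _ _
    have hcoeA : ((A.toNNReal⁻¹ : ℝ≥0) : ℝ) = A⁻¹ := by
      rw [NNReal.coe_inv, Real.coe_toNNReal _ hA.le]
    rw [hcoeA]
    rcases eq_or_lt_of_le (norm_nonneg x) with h0 | h0
    · rw [← h0]; positivity
    · have h2 : A * ‖x‖ ≤ ‖S x‖ := by nlinarith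
      calc ‖x‖ = A⁻¹ * (A * ‖x‖) := by field_simp
        _ ≤ A⁻¹ * ‖S x‖ := mul_le_mul_of_nonneg_left h2 (by positivity)
  have hanti : AntilipschitzWith (A.toNNReal⁻¹) S := S.antilipschitz_of_bound hal
  have hclosed : IsClosed (Set.range S) := hanti.isClosed_range S.uniformContinuous
  -- the range of S is all of H
  set K : Submodule ℂ H := LinearMap.range (S : H →ₗ[ℂ] H) with hK
  have hKset : (K : Set H) = Set.range S := by
    ext z; simp [hK, LinearMap.mem_range, Set.mem_range]
  haveI : CompleteSpace K := by
    refine IsClosed.completeSpace_coe (hs := ?_)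
    rw [hKset]; exact hclosed
  have hKtop : K = ⊤ := by
    rw [← Submodule.orthogonal_eq_bot_iff]
    rw [Submodule.eq_bot_iff]
    intro z hz
    have h0 : ⟪S z, z⟫ = 0 := hz (S z) ⟨z, rfl⟩
    have h0' : ⟪z, S z⟫ = 0 := by
      rw [← inner_conj_symm, h0, map_zero]
    have := hlb z
    rw [h0'] at this
    simp only [Complex.zero_re] at this
    have hz0 : ‖z‖ ^ 2 ≤ 0 := by
      by_contra hq
      push_neg at hq
      nlinarith
    have : ‖z‖ = 0 := by nlinarith [sq_nonneg ‖z‖, norm_nonneg z]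
    exact norm_eq_zero.mp this
  obtain ⟨w, hw⟩ : ∃ w, S w = y := by
    have : y ∈ K := hKtop ▸ Submodule.mem_top
    exact this
  refine ⟨fun n => ⟪f n, w⟫, hcoef w, ?_⟩
  have := (hsumS w).hasSum
  rwa [show (∑' n, ⟪f n, w⟫ • f n) = y from hw] at this

end Aux

set_option maxHeartbeats 1000000 in
/-- If `{T^n φ}` is an overcomplete frame for `H` with `T` bounded, then the image chain of
`T` is finite: `ran(T^N) = ran(T^{N+1})` for some `N`. -/
theorem stmt9 {H : Type*} [NormedAddCommGroup H] [InnerProductSpace ℂ H] [CompleteSpace H]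
    (T : H →L[ℂ] H) (φ : H) (hf : IsFrame (fun n : ℕ => (T ^ n) φ))
    (hover : ∃ c : ℕ → ℂ, c ≠ 0 ∧ Summable (fun n => ‖c n‖ ^ 2) ∧
      HasSum (fun n => c n • (T ^ n) φ) (0 : H)) :
    ∃ N : ℕ, Set.range ⇑(T ^ N) = Set.range ⇑(T ^ (N + 1)) := by
  classical
  obtain ⟨c, hc0, hc2, hcs⟩ := hover
  set f : ℕ → H := fun n => (T ^ n) φ with hfdef
  have hex : ∃ n, c n ≠ 0 := by
    by_contra h
    push_neg at h
    exact hc0 (funext h)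
  obtain ⟨m, hcm, hlt⟩ : ∃ m, c m ≠ 0 ∧ ∀ k < m, c k = 0 :=
    ⟨Nat.find hex, Nat.find_spec hex, fun k hk => not_not.mp (Nat.find_min hex hk)⟩
  have pow_app : ∀ (k n : ℕ), (T ^ k) (f n) = f (k + n) := by
    intro k n
    show (T ^ k) ((T ^ n) φ) = (T ^ (k + n)) φ
    rw [← ContinuousLinearMap.mul_apply, ← pow_add]
  -- Step 1: shift the vanishing relation past the leading zeros
  have h1 : HasSum (fun n => c (n + m) • f (n + m)) 0 := by
    refine (hasSum_nat_add_iff (f := fun n => c n • f n) m).mpr ?_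
    have hz : ∑ i ∈ Finset.range m, c i • f i = 0 :=
      Finset.sum_eq_zero fun i hi => by rw [hlt i (Finset.mem_range.1 hi), zero_smul]
    rw [hz, add_zero]
    exact hcs
  -- Step 2: peel off the first (nonzero) term
  have h2 : HasSum (fun n => c (n + 1 + m) • f (n + 1 + m)) (-(c m • f m)) := by
    refine (hasSum_nat_add_iff (f := fun n => c (n + m) • f (n + m)) 1).mpr ?_
    simpa using h1
  -- Step 3: T^m φ = T^(m+1) ψ
  have hb2 : Summable (fun n => ‖c (n + 1 + m)‖ ^ 2) := by
    have h := (summable_nat_add_iff (f := fun n => ‖c n‖ ^ 2) (m + 1)).mpr hc2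
    exact h.congr fun n => by rw [show n + (m + 1) = n + 1 + m from by ring]
  have hσsum : Summable (fun n => c (n + 1 + m) • f n) := frame_synthesis hf hb2
  set σ := ∑' n, c (n + 1 + m) • f n with hσ
  have hTσ : HasSum (fun n => c (n + 1 + m) • f (n + 1 + m)) ((T ^ (m + 1)) σ) := by
    have h3 := hσsum.hasSum.mapL (T ^ (m + 1))
    have heq : (fun n => (T ^ (m + 1)) (c (n + 1 + m) • f n)) =
        fun n => c (n + 1 + m) • f (n + 1 + m) := by
      funext n
      rw [map_smul, pow_app, show m + 1 + n = n + 1 + m from by ring]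
    rwa [heq] at h3
  have hψ : f m = (T ^ (m + 1)) ((-(c m)⁻¹) • σ) := by
    have huniq : (T ^ (m + 1)) σ = -(c m • f m) := hTσ.unique h2
    rw [map_smul, huniq, smul_neg, neg_smul, neg_neg, smul_smul, inv_mul_cancel₀ hcm,
      one_smul]
  refine ⟨m, Set.Subset.antisymm ?_ ?_⟩
  · -- range T^m ⊆ range T^(m+1)
    rintro _ ⟨x, rfl⟩
    obtain ⟨a, ha2, has⟩ := frame_expansion hf x
    have hTm : HasSum (fun n => a n • f (m + n)) ((T ^ m) x) := by
      have h3 := has.mapL (T ^ m)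
      have heq : (fun n => (T ^ m) (a n • f n)) = fun n => a n • f (m + n) := by
        funext n
        rw [map_smul, pow_app]
      rwa [heq] at h3
    have hp : HasSum (fun n => a (n + 1) • f (m + (n + 1))) ((T ^ m) x - a 0 • f m) := by
      refine (hasSum_nat_add_iff (f := fun n => a n • f (m + n)) 1).mpr ?_
      simpa using hTm
    have ha2' : Summable (fun n => ‖a (n + 1)‖ ^ 2) := (summable_nat_add_iff 1).mpr ha2
    have hτsum : Summable (fun n => a (n + 1) • f n) := frame_synthesis hf ha2'
    set τ := ∑' n, a (n + 1) • f n with hτ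
    have hTτ : HasSum (fun n => a (n + 1) • f (m + (n + 1))) ((T ^ (m + 1)) τ) := by
      have h3 := hτsum.hasSum.mapL (T ^ (m + 1))
      have heq : (fun n => (T ^ (m + 1)) (a (n + 1) • f n)) =
          fun n => a (n + 1) • f (m + (n + 1)) := by
        funext n
        rw [map_smul, pow_app, show m + 1 + n = m + (n + 1) from by ring]
      rwa [heq] at h3
    have huniq : (T ^ (m + 1)) τ = (T ^ m) x - a 0 • f m := hTτ.unique hp
    refine ⟨τ + a 0 • ((-(c m)⁻¹) • σ), ?_⟩
    rw [map_add, huniq, map_smul, ← hψ]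
    abel
  · -- range T^(m+1) ⊆ range T^m
    rintro _ ⟨x, rfl⟩
    exact ⟨T x, by rw [pow_succ, ContinuousLinearMap.mul_apply]⟩
end

section
/- Let {T^n φ} (n ≥ 0) be a frame for H with lower bound A, where T is bounded. Let V ⊆ H be a T-invariant subspace with ‖T ψ‖ ≤ μ‖ψ‖ for all ψ ∈ V, where 0 ≤ μ < 1. Then for every ψ ∈ V with ‖ψ‖ < √(A(1−μ²)), the sequence {T^n(φ + ψ)} (n ≥ 0) is a frame for H. -/
open scoped ComplexInnerProductSpace

private lemma summable_mul_of_sq_s17 (a b : ℕ → ℝ) (ha : ∀ n, 0 ≤ a n) (hb : ∀ n, 0 ≤ b n)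
    (hsa : Summable fun n => a n ^ 2) (hsb : Summable fun n => b n ^ 2) :
    Summable fun n => a n * b n := by
  refine Summable.of_nonneg_of_le (fun n => mul_nonneg (ha n) (hb n))
    (fun n => ?_) ((hsa.add hsb).div_const 2)
  have := sq_nonneg (a n - b n)
  nlinarith

private lemma tsum_cs (a b : ℕ → ℝ) (ha : ∀ n, 0 ≤ a n) (hb : ∀ n, 0 ≤ b n)
    (hsa : Summable fun n => a n ^ 2) (hsb : Summable fun n => b n ^ 2) :
    ∑' n, a n * b n ≤ Real.sqrt (∑' n, a n ^ 2) * Real.sqrt (∑' n, b n ^ 2) := by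
  refine Summable.tsum_le_of_sum_le (summable_mul_of_sq_s17 a b ha hb hsa hsb) (fun s => ?_)
  have h1 : ∑ i ∈ s, a i * b i ≤ Real.sqrt ((∑ i ∈ s, a i ^ 2) * ∑ i ∈ s, b i ^ 2) := by
    refine Real.le_sqrt_of_sq_le ?_
    exact Finset.sum_mul_sq_le_sq_mul_sq s a b
  refine h1.trans ?_
  rw [Real.sqrt_mul (Finset.sum_nonneg fun i _ => sq_nonneg _)]
  gcongr
  · exact Summable.sum_le_tsum s (fun i _ => sq_nonneg _) hsa
  · exact Summable.sum_le_tsum s (fun i _ => sq_nonneg _) hsb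

/-- Perturbation of the generator within a `T`-invariant subspace on which `T` is a
contraction: if `{T^n φ}` is a frame with lower bound `A` and `‖ψ‖ < √(A(1-μ²))` for
`ψ ∈ V`, then `{T^n (φ + ψ)}` is a frame for `H`. -/
theorem stmt17 {H : Type*} [NormedAddCommGroup H] [InnerProductSpace ℂ H] [CompleteSpace H]
    (T : H →L[ℂ] H) (φ : H) (A : ℝ) (hA : 0 < A)
    (hf : IsFrame (fun n : ℕ => (T ^ n) φ))
    (hlow : ∀ x : H, A * ‖x‖ ^ 2 ≤ ∑' n : ℕ, ‖⟪x, (T ^ n) φ⟫‖ ^ 2)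
    (V : Submodule ℂ H) (hV : ∀ v ∈ V, T v ∈ V)
    (μ : ℝ) (hμ0 : 0 ≤ μ) (hμ1 : μ < 1) (hcontr : ∀ ψ ∈ V, ‖T ψ‖ ≤ μ * ‖ψ‖) :
    ∀ ψ ∈ V, ‖ψ‖ < Real.sqrt (A * (1 - μ ^ 2)) →
      IsFrame (fun n : ℕ => (T ^ n) (φ + ψ)) := by
  intro ψ hψV hψ
  obtain ⟨A0, B, hA0, hB, hfb⟩ := hf
  have hμsq : μ ^ 2 < 1 := by nlinarith
  have h1μ : (0:ℝ) < 1 - μ ^ 2 := by linarith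
  set Q : ℝ := ‖ψ‖ ^ 2 / (1 - μ ^ 2) with hQdef
  have hQ0 : 0 ≤ Q := div_nonneg (sq_nonneg _) h1μ.le
  have hQA : Q < A := by
    have h2 : ‖ψ‖ ^ 2 < A * (1 - μ ^ 2) := by
      have := (Real.lt_sqrt (norm_nonneg ψ)).mp hψ
      linarith
    rw [hQdef, div_lt_iff₀ h1μ]
    linarith
  -- iterates of ψ
  have hTn : ∀ n : ℕ, (T ^ n) ψ ∈ V ∧ ‖(T ^ n) ψ‖ ≤ μ ^ n * ‖ψ‖ := by
    intro n
    induction n with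
    | zero => simpa using hψV
    | succ n ih =>
      have hmem : (T ^ (n + 1)) ψ = T ((T ^ n) ψ) := by
        rw [pow_succ']; rfl
      refine ⟨by rw [hmem]; exact hV _ ih.1, ?_⟩
      rw [hmem]
      calc ‖T ((T ^ n) ψ)‖ ≤ μ * ‖(T ^ n) ψ‖ := hcontr _ ih.1
        _ ≤ μ * (μ ^ n * ‖ψ‖) := by nlinarith [ih.2, norm_nonneg ((T ^ n) ψ)]
        _ = μ ^ (n + 1) * ‖ψ‖ := by ring
  -- constants
  have hsqrtQA : Real.sqrt Q < Real.sqrt A := Real.sqrt_lt_sqrt hQ0 hQA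
  have hAQpos : 0 < Real.sqrt A - Real.sqrt Q := by linarith
  refine ⟨(Real.sqrt A - Real.sqrt Q) ^ 2, (Real.sqrt B + Real.sqrt Q) ^ 2,
    pow_pos hAQpos 2, pow_pos (by positivity) 2, fun x => ?_⟩
  by_cases hx : x = 0
  · subst hx; simp
  have hxpos : 0 < ‖x‖ := norm_pos_iff.mpr hx
  set a : ℕ → ℝ := fun n => ‖⟪x, (T ^ n) φ⟫‖ with hadef
  set b : ℕ → ℝ := fun n => ‖⟪x, (T ^ n) ψ⟫‖ with hbdef
  set c : ℕ → ℝ := fun n => ‖⟪x, (T ^ n) (φ + ψ)⟫‖ with hcdef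
  have hsplit : ∀ n, (⟪x, (T ^ n) (φ + ψ)⟫ : ℂ) = ⟪x, (T ^ n) φ⟫ + ⟪x, (T ^ n) ψ⟫ := by
    intro n; rw [map_add, inner_add_right]
  have ha0 : ∀ n, 0 ≤ a n := fun n => norm_nonneg _
  have hb0 : ∀ n, 0 ≤ b n := fun n => norm_nonneg _
  have hc0 : ∀ n, 0 ≤ c n := fun n => norm_nonneg _
  -- bounds on b
  have hble : ∀ n, b n ≤ ‖x‖ * ‖ψ‖ * μ ^ n := by
    intro n
    calc b n ≤ ‖x‖ * ‖(T ^ n) ψ‖ := norm_inner_le_norm _ _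
      _ ≤ ‖x‖ * (μ ^ n * ‖ψ‖) := by
          have := (hTn n).2; nlinarith [norm_nonneg x]
      _ = ‖x‖ * ‖ψ‖ * μ ^ n := by ring
  have hgeom : Summable fun n : ℕ => (‖x‖ * ‖ψ‖) ^ 2 * (μ ^ 2) ^ n :=
    (summable_geometric_of_lt_one (by positivity) hμsq).mul_left _
  have hsb : Summable fun n => b n ^ 2 := by
    refine Summable.of_nonneg_of_le (fun n => sq_nonneg _) (fun n => ?_) hgeom
    calc b n ^ 2 ≤ (‖x‖ * ‖ψ‖ * μ ^ n) ^ 2 := pow_le_pow_left₀ (hb0 n) (hble n) 2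
      _ = (‖x‖ * ‖ψ‖) ^ 2 * (μ ^ 2) ^ n := by ring
  have hQb : ∑' n, b n ^ 2 ≤ Q * ‖x‖ ^ 2 := by
    have h1 : ∑' n, b n ^ 2 ≤ ∑' n : ℕ, (‖x‖ * ‖ψ‖) ^ 2 * (μ ^ 2) ^ n := by
      refine Summable.tsum_le_tsum (fun n => ?_) hsb hgeom
      calc b n ^ 2 ≤ (‖x‖ * ‖ψ‖ * μ ^ n) ^ 2 := pow_le_pow_left₀ (hb0 n) (hble n) 2
        _ = (‖x‖ * ‖ψ‖) ^ 2 * (μ ^ 2) ^ n := by ring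
    rw [tsum_mul_left, tsum_geometric_of_lt_one (by positivity) hμsq] at h1
    calc ∑' n, b n ^ 2 ≤ (‖x‖ * ‖ψ‖) ^ 2 * (1 - μ ^ 2)⁻¹ := h1
      _ = Q * ‖x‖ ^ 2 := by rw [hQdef]; field_simp
  -- summability of a²
  have hsa : Summable fun n => a n ^ 2 := by
    by_contra hcon
    have h0 : ∑' n, a n ^ 2 = 0 := tsum_eq_zero_of_not_summable hcon
    rw [hadef] at h0
    have h2 := hlow x
    rw [h0] at h2
    nlinarith [mul_pos hA (pow_pos hxpos 2)]
  have hPA : A * ‖x‖ ^ 2 ≤ ∑' n, a n ^ 2 := hlow x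
  have hPB : ∑' n, a n ^ 2 ≤ B * ‖x‖ ^ 2 := (hfb x).2
  set P := ∑' n, a n ^ 2 with hPdef
  set Qb := ∑' n, b n ^ 2 with hQbdef
  have hP0 : 0 ≤ P := tsum_nonneg fun n => sq_nonneg _
  have hQb0 : 0 ≤ Qb := tsum_nonneg fun n => sq_nonneg _
  -- Cauchy-Schwarz
  have hab_s : Summable fun n => a n * b n := summable_mul_of_sq_s17 a b ha0 hb0 hsa hsb
  have hcs : ∑' n, a n * b n ≤ Real.sqrt P * Real.sqrt Qb := tsum_cs a b ha0 hb0 hsa hsb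
  -- pointwise bounds on c
  have hc_up : ∀ n, c n ≤ a n + b n := by
    intro n; rw [hcdef]; simp only; rw [hsplit n]; exact norm_add_le _ _
  have hc_low : ∀ n, (a n - b n) ^ 2 ≤ c n ^ 2 := by
    intro n
    have h1 : a n ≤ c n + b n := by
      have : (⟪x, (T ^ n) φ⟫ : ℂ) = ⟪x, (T ^ n) (φ + ψ)⟫ - ⟪x, (T ^ n) ψ⟫ := by
        rw [hsplit n]; ring
      calc a n = ‖(⟪x, (T ^ n) (φ + ψ)⟫ : ℂ) - ⟪x, (T ^ n) ψ⟫‖ := by rw [hadef]; simp only; rw [this]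
        _ ≤ c n + b n := norm_sub_le _ _
    have h2 : b n ≤ c n + a n := by
      have : (⟪x, (T ^ n) ψ⟫ : ℂ) = ⟪x, (T ^ n) (φ + ψ)⟫ - ⟪x, (T ^ n) φ⟫ := by
        rw [hsplit n]; ring
      calc b n = ‖(⟪x, (T ^ n) (φ + ψ)⟫ : ℂ) - ⟪x, (T ^ n) φ⟫‖ := by rw [hbdef]; simp only; rw [this]
        _ ≤ c n + a n := norm_sub_le _ _
    exact sq_le_sq' (by linarith) (by linarith)
  -- summability of c²
  have hsum_apb : Summable fun n => (a n + b n) ^ 2 := by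
    have : (fun n => (a n + b n) ^ 2) = fun n => a n ^ 2 + 2 * (a n * b n) + b n ^ 2 := by
      funext n; ring
    rw [this]
    exact (hsa.add (hab_s.mul_left 2)).add hsb
  have hsc : Summable fun n => c n ^ 2 := by
    exact Summable.of_nonneg_of_le (fun n => sq_nonneg _)
      (fun n => pow_le_pow_left₀ (hc0 n) (hc_up n) 2) hsum_apb
  have hsum_amb : Summable fun n => (a n - b n) ^ 2 := by
    have : (fun n => (a n - b n) ^ 2) = fun n => a n ^ 2 - 2 * (a n * b n) + b n ^ 2 := by
      funext n; ring
    rw [this]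
    exact (hsa.sub (hab_s.mul_left 2)).add hsb
  -- tsum identities
  have htsum_apb : ∑' n, (a n + b n) ^ 2 = P + 2 * ∑' n, a n * b n + Qb := by
    have h1 : (fun n => (a n + b n) ^ 2) = fun n => a n ^ 2 + 2 * (a n * b n) + b n ^ 2 := by
      funext n; ring
    rw [h1, Summable.tsum_add (hsa.add (hab_s.mul_left 2)) hsb, Summable.tsum_add hsa (hab_s.mul_left 2),
      tsum_mul_left]
  have htsum_amb : ∑' n, (a n - b n) ^ 2 = P - 2 * ∑' n, a n * b n + Qb := by
    have h1 : (fun n => (a n - b n) ^ 2) = fun n => a n ^ 2 - 2 * (a n * b n) + b n ^ 2 := by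
      funext n; ring
    rw [h1, Summable.tsum_add (hsa.sub (hab_s.mul_left 2)) hsb, Summable.tsum_sub hsa (hab_s.mul_left 2),
      tsum_mul_left]
  have hsqP : Real.sqrt P ^ 2 = P := Real.sq_sqrt hP0
  have hsqQb : Real.sqrt Qb ^ 2 = Qb := Real.sq_sqrt hQb0
  have hPlow : Real.sqrt A * ‖x‖ ≤ Real.sqrt P := by
    have : Real.sqrt (A * ‖x‖ ^ 2) ≤ Real.sqrt P := Real.sqrt_le_sqrt hPA
    rwa [Real.sqrt_mul hA.le, Real.sqrt_sq hxpos.le] at this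
  have hPhigh : Real.sqrt P ≤ Real.sqrt B * ‖x‖ := by
    have : Real.sqrt P ≤ Real.sqrt (B * ‖x‖ ^ 2) := Real.sqrt_le_sqrt hPB
    rwa [Real.sqrt_mul hB.le, Real.sqrt_sq hxpos.le] at this
  have hQbhigh : Real.sqrt Qb ≤ Real.sqrt Q * ‖x‖ := by
    have : Real.sqrt Qb ≤ Real.sqrt (Q * ‖x‖ ^ 2) := Real.sqrt_le_sqrt hQb
    rwa [Real.sqrt_mul hQ0, Real.sqrt_sq hxpos.le] at this
  have hsqrtP0 : 0 ≤ Real.sqrt P := Real.sqrt_nonneg _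
  have hsqrtQb0 : 0 ≤ Real.sqrt Qb := Real.sqrt_nonneg _
  have hab0 : 0 ≤ ∑' n, a n * b n := tsum_nonneg fun n => mul_nonneg (ha0 n) (hb0 n)
  constructor
  · -- lower bound
    have h1 : ∑' n, (a n - b n) ^ 2 ≤ ∑' n, c n ^ 2 :=
      Summable.tsum_le_tsum hc_low hsum_amb hsc
    have h2 : (Real.sqrt P - Real.sqrt Qb) ^ 2 ≤ ∑' n, (a n - b n) ^ 2 := by
      rw [htsum_amb]
      have hexp : (Real.sqrt P - Real.sqrt Qb) ^ 2
          = P - 2 * (Real.sqrt P * Real.sqrt Qb) + Qb := by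
        rw [sub_sq, hsqP, hsqQb]; ring
      rw [hexp]
      linarith [hcs]
    have h3 : (Real.sqrt A - Real.sqrt Q) * ‖x‖ ≤ Real.sqrt P - Real.sqrt Qb := by
      rw [sub_mul]; linarith [hPlow, hQbhigh]
    have h4 : ((Real.sqrt A - Real.sqrt Q) * ‖x‖) ^ 2 ≤ (Real.sqrt P - Real.sqrt Qb) ^ 2 :=
      pow_le_pow_left₀ (by positivity) h3 2
    calc (Real.sqrt A - Real.sqrt Q) ^ 2 * ‖x‖ ^ 2
        = ((Real.sqrt A - Real.sqrt Q) * ‖x‖) ^ 2 := by ring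
      _ ≤ (Real.sqrt P - Real.sqrt Qb) ^ 2 := h4
      _ ≤ ∑' n, (a n - b n) ^ 2 := h2
      _ ≤ ∑' n, c n ^ 2 := h1
  · -- upper bound
    have h1 : ∑' n, c n ^ 2 ≤ ∑' n, (a n + b n) ^ 2 := by
      refine Summable.tsum_le_tsum (fun n => ?_) hsc hsum_apb
      exact pow_le_pow_left₀ (hc0 n) (hc_up n) 2
    have h2 : ∑' n, (a n + b n) ^ 2 ≤ (Real.sqrt P + Real.sqrt Qb) ^ 2 := by
      rw [htsum_apb]
      have hexp : (Real.sqrt P + Real.sqrt Qb) ^ 2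
          = P + 2 * (Real.sqrt P * Real.sqrt Qb) + Qb := by
        rw [add_sq, hsqP, hsqQb]; ring
      rw [hexp]
      linarith [hcs]
    have h3 : Real.sqrt P + Real.sqrt Qb ≤ (Real.sqrt B + Real.sqrt Q) * ‖x‖ := by
      rw [add_mul]; linarith [hPhigh, hQbhigh]
    have h4 : (Real.sqrt P + Real.sqrt Qb) ^ 2 ≤ ((Real.sqrt B + Real.sqrt Q) * ‖x‖) ^ 2 :=
      pow_le_pow_left₀ (by positivity) h3 2
    calc ∑' n, c n ^ 2 ≤ ∑' n, (a n + b n) ^ 2 := h1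
      _ ≤ (Real.sqrt P + Real.sqrt Qb) ^ 2 := h2
      _ ≤ ((Real.sqrt B + Real.sqrt Q) * ‖x‖) ^ 2 := h4
      _ = (Real.sqrt B + Real.sqrt Q) ^ 2 * ‖x‖ ^ 2 := by ring
end

section
/- Let {T^n φ} (n ≥ 0) be a frame for H with T bounded, and let V ⊆ H be T-invariant with ‖Tψ‖ ≤ μ‖ψ‖ for all ψ ∈ V, where 0 ≤ μ < 1. Then for every ψ ∈ V, the operator K : ℓ²(ℕ₀) → H, K{c_n} = ∑_n c_n T^n ψ, is a well-defined compact operator. -/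
/-!
A geometric bound `‖Tⁿψ‖ ≤ μⁿ‖ψ‖` makes `(Tⁿψ)` absolutely summable. For an absolutely summable
sequence `(xᵢ)` the rank-one operators `c ↦ cᵢ • xᵢ` on `ℓᵖ` have operator norm at most `‖xᵢ‖`, so
they sum in operator norm; the sum is the synthesis operator, and it is compact because compact
operators form a closed subspace.
-/

open scoped ComplexInnerProductSpace

open ENNReal

theorem HasSum.isCompactOperator {ι 𝕜 E F : Type*} [NontriviallyNormedField 𝕜]
    [NormedAddCommGroup E] [NormedSpace 𝕜 E] [NormedAddCommGroup F] [NormedSpace 𝕜 F]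
    [CompleteSpace F] {A : ι → E →L[𝕜] F} {K : E →L[𝕜] F}
    (hK : HasSum A K) (hA : ∀ i, IsCompactOperator (A i)) : IsCompactOperator K :=
  isCompactOperator_of_tendsto hK <| .of_forall fun _ =>
    (compactOperator (RingHom.id 𝕜) E F).sum_mem fun i _ => hA i

theorem ContinuousLinearMap.isCompactOperator_smulRight {𝕜 E F : Type*}
    [NontriviallyNormedField 𝕜] [LocallyCompactSpace 𝕜]
    [NormedAddCommGroup E] [NormedSpace 𝕜 E] [NormedAddCommGroup F] [NormedSpace 𝕜 F]
    (f : E →L[𝕜] 𝕜) (x : F) : IsCompactOperator (f.smulRight x) :=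
  (isCompactOperator_of_locallyCompactSpace_dom f).continuous_comp
    (continuous_id.smul continuous_const)

theorem lp.exists_hasSum_smul_isCompactOperator {ι 𝕜 E : Type*} [RCLike 𝕜]
    [NormedAddCommGroup E] [NormedSpace 𝕜 E] [CompleteSpace E] {p : ℝ≥0∞} [Fact (1 ≤ p)]
    {x : ι → E} (hx : Summable (‖x ·‖)) :
    ∃ K : lp (fun _ : ι => 𝕜) p →L[𝕜] E,
      (∀ c : lp (fun _ : ι => 𝕜) p, HasSum (fun i => c i • x i) (K c)) ∧
      IsCompactOperator K := by
  let A : ι → lp (fun _ : ι => 𝕜) p →L[𝕜] E := fun i =>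
    (lp.evalCLM 𝕜 (fun _ => 𝕜) p i).smulRight (x i)
  have hA : Summable A := by
    refine .of_norm_bounded hx fun i => ContinuousLinearMap.opNorm_le_bound _ (norm_nonneg _)
      fun c => ?_
    calc ‖c i • x i‖ = ‖c i‖ * ‖x i‖ := norm_smul _ _
      _ ≤ ‖c‖ * ‖x i‖ := by
        gcongr; exact lp.norm_apply_le_norm (one_pos.trans_le Fact.out).ne' c i
      _ = ‖x i‖ * ‖c‖ := mul_comm _ _
  exact ⟨∑' i, A i, fun c => hA.hasSum.mapL (ContinuousLinearMap.apply 𝕜 E c),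
    hA.hasSum.isCompactOperator fun i => ContinuousLinearMap.isCompactOperator_smulRight _ _⟩

theorem norm_pow_apply_le_of_mapsTo {𝕜 E : Type*} [NormedField 𝕜] [SeminormedAddCommGroup E]
    [NormedSpace 𝕜 E] {T : E →L[𝕜] E} {V : Submodule 𝕜 E} (hV : ∀ v ∈ V, T v ∈ V) {μ : ℝ}
    (hμ : 0 ≤ μ) (hT : ∀ v ∈ V, ‖T v‖ ≤ μ * ‖v‖) (n : ℕ) {v : E} (hv : v ∈ V) :
    ‖(T ^ n) v‖ ≤ μ ^ n * ‖v‖ := by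
  induction n generalizing v with
  | zero => simp
  | succ n ih =>
    calc ‖(T ^ (n + 1)) v‖ = ‖(T ^ n) (T v)‖ := by rw [pow_succ]; rfl
      _ ≤ μ ^ n * ‖T v‖ := ih (hV v hv)
      _ ≤ μ ^ n * (μ * ‖v‖) := by gcongr; exact hT v hv
      _ = μ ^ (n + 1) * ‖v‖ := by ring

theorem stmt18_general {H : Type*} [NormedAddCommGroup H] [InnerProductSpace ℂ H] [CompleteSpace H]
    (T : H →L[ℂ] H)
    (V : Submodule ℂ H) (hV : ∀ v ∈ V, T v ∈ V)
    (μ : ℝ) (hμ0 : 0 ≤ μ) (hμ1 : μ < 1) (hcontr : ∀ ψ ∈ V, ‖T ψ‖ ≤ μ * ‖ψ‖) :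
    ∀ ψ ∈ V, ∃ K : lp (fun _ : ℕ => ℂ) 2 →L[ℂ] H,
      (∀ c : lp (fun _ : ℕ => ℂ) 2, HasSum (fun n => c n • (T ^ n) ψ) (K c)) ∧
      IsCompactOperator ⇑K := by
  intro ψ hψ
  have hgeom : Summable fun n => μ ^ n * ‖ψ‖ :=
    (summable_geometric_of_lt_one hμ0 hμ1).mul_right _
  exact lp.exists_hasSum_smul_isCompactOperator <| .of_nonneg_of_le (fun _ => norm_nonneg _)
    (fun n => norm_pow_apply_le_of_mapsTo hV hμ0 hcontr n hψ) hgeom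

/-- If `{T^n φ}` is a frame and `V` is a `T`-invariant subspace on which `T` is a
contraction, then for every `ψ ∈ V` the operator `K : ℓ² → H`, `K{cₙ} = ∑ cₙ Tⁿψ`, is a
well-defined compact operator. -/
theorem stmt18 {H : Type*} [NormedAddCommGroup H] [InnerProductSpace ℂ H] [CompleteSpace H]
    (T : H →L[ℂ] H) (φ : H)
    (hf : IsFrame (fun n : ℕ => (T ^ n) φ))
    (V : Submodule ℂ H) (hV : ∀ v ∈ V, T v ∈ V)
    (μ : ℝ) (hμ0 : 0 ≤ μ) (hμ1 : μ < 1) (hcontr : ∀ ψ ∈ V, ‖T ψ‖ ≤ μ * ‖ψ‖) :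
    ∀ ψ ∈ V, ∃ K : lp (fun _ : ℕ => ℂ) 2 →L[ℂ] H,
      (∀ c : lp (fun _ : ℕ => ℂ) 2, HasSum (fun n => c n • (T ^ n) ψ) (K c)) ∧
      IsCompactOperator ⇑K :=
  stmt18_general T V hV μ hμ0 hμ1 hcontr
end

section
/- Let H be an infinite-dimensional Hilbert space, T : H → H a compact operator, and φ_1, …, φ_J ∈ H finitely many vectors. Then the union ⋃_{j=1}^J {T^n φ_j : n ≥ 0} cannot be a frame for H. -/
/-!
Suppose the orbits `{Tⁿ φⱼ}` formed a frame with bounds `A, B`. For `v` orthogonal to every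
`φⱼ` the terms with `n = 0` vanish, so shifting `n` by one and moving `T` across the inner
product gives `A‖v‖² ≤ B‖T† v‖² ≤ B‖v‖‖T T† v‖`. Hence the compact operator `T T†` is bounded
below on the closed subspace `span{φⱼ}ᗮ`, which has finite codimension and is therefore
infinite-dimensional. But a compact operator that is bounded below on a Banach space is a closed
embedding, so it pulls a compact neighbourhood of the image of `0` back to a compact
neighbourhood of `0`, and the space is finite-dimensional.
-/

open scoped ComplexInnerProductSpace

open ContinuousLinearMap

theorem IsCompactOperator.finiteDimensional_of_antilipschitz {𝕜 E F : Type*}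
    [NontriviallyNormedField 𝕜] [CompleteSpace 𝕜] [NormedAddCommGroup E] [NormedSpace 𝕜 E]
    [CompleteSpace E] [NormedAddCommGroup F] [NormedSpace 𝕜 F] {g : E →L[𝕜] F}
    (hg : IsCompactOperator g) {K : NNReal} (hK : AntilipschitzWith K g) :
    FiniteDimensional 𝕜 E := by
  obtain ⟨C, hC, hgC⟩ := hg
  exact .of_isCompactOperator_id
    ⟨g ⁻¹' C, (hK.isClosedEmbedding g.uniformContinuous).isCompact_preimage hC, hgC⟩

theorem Submodule.finiteDimensional_of_finiteDimensional_orthogonal {𝕜 E : Type*} [RCLike 𝕜]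
    [NormedAddCommGroup E] [InnerProductSpace 𝕜 E] (K : Submodule 𝕜 E) [FiniteDimensional 𝕜 K]
    [FiniteDimensional 𝕜 Kᗮ] : FiniteDimensional 𝕜 E := by
  have : FiniteDimensional 𝕜 (K ⊔ Kᗮ : Submodule 𝕜 E) := Submodule.finiteDimensional_sup K Kᗮ
  rw [Submodule.sup_orthogonal_of_hasOrthogonalProjection] at this
  exact Submodule.topEquiv.finiteDimensional

theorem ContinuousLinearMap.norm_adjoint_apply_sq_le {𝕜 E F : Type*} [RCLike 𝕜]
    [NormedAddCommGroup E] [InnerProductSpace 𝕜 E] [CompleteSpace E]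
    [NormedAddCommGroup F] [InnerProductSpace 𝕜 F] [CompleteSpace F] (T : E →L[𝕜] F) (y : F) :
    ‖adjoint T y‖ ^ 2 ≤ ‖y‖ * ‖(T ∘L adjoint T) y‖ := by
  rw [apply_norm_sq_eq_inner_adjoint_right, adjoint_adjoint]
  exact (RCLike.re_le_norm _).trans (norm_inner_le_norm _ _)

theorem tsum_norm_inner_pow_apply_eq_adjoint {𝕜 ι E : Type*} [RCLike 𝕜]
    [NormedAddCommGroup E] [InnerProductSpace 𝕜 E] [CompleteSpace E] (T : E →L[𝕜] E)
    (φ : ι → E) {v : E} (hv : ∀ i, inner 𝕜 v (φ i) = 0) :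
    ∑' p : ι × ℕ, ‖inner 𝕜 v ((T ^ p.2) (φ p.1))‖ ^ 2
      = ∑' p : ι × ℕ, ‖inner 𝕜 (adjoint T v) ((T ^ p.2) (φ p.1))‖ ^ 2 := by
  have hsupp : Function.support (fun p : ι × ℕ => ‖inner 𝕜 v ((T ^ p.2) (φ p.1))‖ ^ 2)
      ⊆ Set.range (Prod.map id Nat.succ) := by
    rintro ⟨i, _ | n⟩ hp
    · simp [hv] at hp
    · exact ⟨(i, n), rfl⟩
  rw [← (Function.injective_id.prodMap Nat.succ_injective).tsum_eq hsupp]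
  congr 1 with p
  rw [Prod.map_snd, pow_succ' T, adjoint_inner_left]
  rfl

theorem IsFrame.exists_mul_norm_le_of_mem_orthogonal {ι H : Type*} [NormedAddCommGroup H]
    [InnerProductSpace ℂ H] [CompleteSpace H] {T : H →L[ℂ] H} {φ : ι → H}
    (hframe : IsFrame (fun p : ι × ℕ => (T ^ p.2) (φ p.1))) :
    ∃ c > 0, ∀ v ∈ (Submodule.span ℂ (Set.range φ))ᗮ, c * ‖v‖ ≤ ‖(T ∘L adjoint T) v‖ := by
  obtain ⟨A, B, hA, hB, hbounds⟩ := hframe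
  refine ⟨A / B, div_pos hA hB, fun v hv => ?_⟩
  have hvφ : ∀ i, ⟪v, φ i⟫ = 0 := fun i =>
    Submodule.inner_left_of_mem_orthogonal (Submodule.subset_span (Set.mem_range_self i)) hv
  have hsq : A * ‖v‖ ^ 2 ≤ B * (‖v‖ * ‖(T ∘L adjoint T) v‖) := calc
    A * ‖v‖ ^ 2 ≤ ∑' p : ι × ℕ, ‖⟪adjoint T v, (T ^ p.2) (φ p.1)⟫‖ ^ 2 :=
      tsum_norm_inner_pow_apply_eq_adjoint T φ hvφ ▸ (hbounds v).1
    _ ≤ B * ‖adjoint T v‖ ^ 2 := (hbounds (adjoint T v)).2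
    _ ≤ B * (‖v‖ * ‖(T ∘L adjoint T) v‖) := by gcongr; exact T.norm_adjoint_apply_sq_le v
  rcases (norm_nonneg v).eq_or_lt with hv0 | hvpos
  · simp [← hv0]
  · rw [div_mul_eq_mul_div, div_le_iff₀ hB]
    nlinarith

/-- No-go result for compact operators: if `H` is infinite-dimensional and `T` is compact,
then for any finitely many vectors `φ_1, …, φ_J` the family `⋃ⱼ {T^n φⱼ : n ≥ 0}` is not a
frame for `H`. -/
theorem stmt19 {H : Type*} [NormedAddCommGroup H] [InnerProductSpace ℂ H] [CompleteSpace H]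
    (hdim : ¬ FiniteDimensional ℂ H)
    (T : H →L[ℂ] H) (hT : IsCompactOperator ⇑T)
    (J : ℕ) (φ : Fin J → H) :
    ¬ IsFrame (fun p : Fin J × ℕ => (T ^ p.2) (φ p.1)) := by
  intro hframe
  set K := Submodule.span ℂ (Set.range φ)
  obtain ⟨c, hc, hbelow⟩ := hframe.exists_mul_norm_le_of_mem_orthogonal
  obtain ⟨L, hL⟩ := (antilipschitzWith_iff_exists_mul_le_norm
    (f := T ∘L adjoint T ∘L Kᗮ.subtypeL)).mpr ⟨c, hc, fun v => hbelow v v.2⟩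
  have : FiniteDimensional ℂ Kᗮ :=
    (hT.comp_clm (adjoint T ∘L Kᗮ.subtypeL)).finiteDimensional_of_antilipschitz hL
  have : FiniteDimensional ℂ K := FiniteDimensional.span_of_finite ℂ (Set.finite_range φ)
  exact hdim K.finiteDimensional_of_finiteDimensional_orthogonal
end
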